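/- arXiv:2001.04628 — 6 statements merged into one kernel-verified Lean document; each statement's English description precedes it below -/
import Mathlib

section
/- Let T : H → H be a quasi-nonexpansive operator with Fix(T) ≠ ∅, and let u be a strong global solution of the evolution equation u'(t) = θ(t)(T(u(t)) − u(t)) + f(t), u(t₀) = u₀. Then ∫_{t₀}^{∞} θ(s)‖T(u(s)) − u(s)‖² ds < +∞. -/
open MeasureTheory Filter Set
open scoped RealInnerProductSpace

/-! Fix `x ∈ Fix(T)` and put `v = u - x`. Quasi-nonexpansiveness gives
`⟪T y - y, y - x⟫ ≤ -‖T y - y‖² / 2`, so the energy identity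
`‖v t‖² = ‖v t₀‖² + 2 ∫ ⟪u', v⟫` yields
`‖v t‖² + ∫ θ ‖T u - u‖² ≤ ‖v t₀‖² + 2 ∫ ‖f‖ ‖v‖`.
Evaluated where `‖v‖` is maximal on `[t₀, t]`, this bounds `v` uniformly, and then bounds the
dissipation by `‖v t₀‖² + 2 sup ‖v‖ ∫ ‖f‖`. Since `u` is only absolutely continuous, the energy
identity is proved through Fubini's theorem on a triangle rather than by the chain rule. -/

section Hilbert

variable {H : Type*} [NormedAddCommGroup H] [InnerProductSpace ℝ H]

theorem sq_norm_sub_add_two_inner_nonpos {T : H → H}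
    (hT : ∀ (y x : H), T x = x → ‖T y - x‖ ≤ ‖y - x‖) {x : H} (hx : T x = x) (y : H) :
    ‖T y - y‖ ^ 2 + 2 * ⟪T y - y, y - x⟫ ≤ 0 := by
  have hsq : ‖(T y - y) + (y - x)‖ ^ 2 ≤ ‖y - x‖ ^ 2 := by
    rw [sub_add_sub_cancel]
    gcongr
    exact hT y x hx
  rw [norm_add_sq_real] at hsq
  linarith

theorem inner_add_sq_norm_le_of_quasiNonexpansive {T : H → H}
    (hT : ∀ (y x : H), T x = x → ‖T y - x‖ ≤ ‖y - x‖) {x : H} (hx : T x = x) (y w : H)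
    {c : ℝ} (hc : 0 ≤ c) :
    c * ‖T y - y‖ ^ 2 / 2 + ⟪c • (T y - y) + w, y - x⟫ ≤ ‖w‖ * ‖y - x‖ := by
  have hqne := mul_le_mul_of_nonneg_left (sq_norm_sub_add_two_inner_nonpos hT hx y) hc
  rw [inner_add_left, real_inner_smul_left]
  nlinarith [real_inner_le_norm w (y - x)]

variable {F v : ℝ → H} {v₀ : H} {a b : ℝ}

theorem integrableOn_inner_primitive (hF : IntegrableOn F (Ioc a b)) :
    IntegrableOn (fun s => ⟪F s, ∫ r in Ioc a s, F r⟫) (Ioc a b) := by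
  rcases le_or_gt a b with hab | hab
  · have hPcont : ContinuousOn (fun s => ∫ r in Ioc a s, F r) (Icc a b) :=
      intervalIntegral.continuousOn_primitive ((integrableOn_Icc_iff_integrableOn_Ioc).mpr hF)
    have hPmeas : AEStronglyMeasurable (fun s => ∫ r in Ioc a s, F r)
        (volume.restrict (Ioc a b)) :=
      (hPcont.aestronglyMeasurable measurableSet_Icc).mono_measure
        (Measure.restrict_mono Ioc_subset_Icc_self le_rfl)
    refine Integrable.mono' (hF.norm.mul_const (∫ r in Ioc a b, ‖F r‖))
      (hF.aestronglyMeasurable.inner hPmeas) ?_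
    filter_upwards [ae_restrict_mem measurableSet_Ioc] with s hs
    calc ‖⟪F s, ∫ r in Ioc a s, F r⟫‖ ≤ ‖F s‖ * ‖∫ r in Ioc a s, F r‖ := norm_inner_le_norm _ _
      _ ≤ ‖F s‖ * ∫ r in Ioc a b, ‖F r‖ := by
        gcongr
        exact (norm_integral_le_integral_norm _).trans <| setIntegral_mono_set hF.norm
          (.of_forall fun r => norm_nonneg _) (Ioc_subset_Ioc_right hs.2).eventuallyLE
  · simp [Ioc_eq_empty_of_le hab.le]

/-- Fubini on the triangle `a < r ≤ s ≤ b`. -/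
theorem integral_inner_primitive_eq_integral_inner_tail [CompleteSpace H]
    (hF : IntegrableOn F (Ioc a b)) :
    ∫ s in Ioc a b, ⟪F s, ∫ r in Ioc a s, F r⟫ = ∫ r in Ioc a b, ⟪F r, ∫ s in Ioc r b, F s⟫ := by
  set μ := volume.restrict (Ioc a b)
  set G : ℝ × ℝ → ℝ := {p | p.2 ≤ p.1}.indicator fun p => ⟪F p.1, F p.2⟫
  have hG : Integrable G (μ.prod μ) := by
    refine Integrable.mono' (hF.norm.mul_prod hF.norm) ?_ (.of_forall fun p => ?_)
    · exact ((hF.aestronglyMeasurable.comp_fst).inner hF.aestronglyMeasurable.comp_snd).indicator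
        (measurableSet_le measurable_snd measurable_fst)
    · exact (norm_indicator_le_norm_self _ _).trans (norm_inner_le_norm _ _)
  calc ∫ s in Ioc a b, ⟪F s, ∫ r in Ioc a s, F r⟫ = ∫ s, ∫ r, G (s, r) ∂μ ∂μ := by
        refine setIntegral_congr_fun measurableSet_Ioc fun s hs => ?_
        have hGs : (fun r => G (s, r)) = (Iic s).indicator fun r => ⟪F s, F r⟫ := by
          ext r; simp [G, indicator_apply]
        rw [hGs, setIntegral_indicator measurableSet_Iic, Ioc_inter_Iic, min_eq_right hs.2,
          integral_inner (hF.mono_set (Ioc_subset_Ioc_right hs.2))]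
    _ = ∫ r, ∫ s, G (s, r) ∂μ ∂μ := integral_integral_swap hG
    _ = ∫ r in Ioc a b, ⟪F r, ∫ s in Ioc r b, F s⟫ := by
        refine setIntegral_congr_fun measurableSet_Ioc fun r hr => ?_
        have hGr : (fun s => G (s, r)) = (Ici r).indicator fun s => ⟪F r, F s⟫ := by
          ext s; simp [G, indicator_apply, real_inner_comm]
        have hIcc : Ioc a b ∩ Ici r = Icc r b := by
          ext s; simp only [mem_inter_iff, mem_Ioc, mem_Ici, mem_Icc]
          constructor
          · rintro ⟨⟨-, hsb⟩, hrs⟩; exact ⟨hrs, hsb⟩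
          · rintro ⟨hrs, hsb⟩; exact ⟨⟨hr.1.trans_le hrs, hsb⟩, hrs⟩
        rw [hGr, setIntegral_indicator measurableSet_Ici, hIcc, integral_Icc_eq_integral_Ioc,
          integral_inner (hF.mono_set (Ioc_subset_Ioc_left hr.1.le))]

theorem sq_norm_setIntegral_Ioc [CompleteSpace H] (hF : IntegrableOn F (Ioc a b)) :
    ‖∫ s in Ioc a b, F s‖ ^ 2 = 2 * ∫ s in Ioc a b, ⟪F s, ∫ r in Ioc a s, F r⟫ := by
  set I := ∫ s in Ioc a b, F s
  have htail : ∀ r ∈ Ioc a b, ∫ s in Ioc r b, F s = I - ∫ s in Ioc a r, F s := fun r hr => by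
    rw [eq_sub_iff_add_eq', ← setIntegral_union (Ioc_disjoint_Ioc_of_le le_rfl) measurableSet_Ioc
      (hF.mono_set (Ioc_subset_Ioc_right hr.2)) (hF.mono_set (Ioc_subset_Ioc_left hr.1.le)),
      Ioc_union_Ioc_eq_Ioc hr.1.le hr.2]
  have hself : ∫ r in Ioc a b, ⟪F r, I⟫ = ‖I‖ ^ 2 := by
    simp_rw [real_inner_comm I]
    rw [integral_inner hF, real_inner_self_eq_norm_sq]
  have hrhs : ∫ r in Ioc a b, ⟪F r, ∫ s in Ioc r b, F s⟫
      = ‖I‖ ^ 2 - ∫ r in Ioc a b, ⟪F r, ∫ s in Ioc a r, F s⟫ := by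
    rw [setIntegral_congr_fun measurableSet_Ioc fun r hr => by rw [htail r hr, inner_sub_right],
      integral_sub (hF.inner_const I) (integrableOn_inner_primitive hF), hself]
  linarith [integral_inner_primitive_eq_integral_inner_tail hF]

theorem continuousOn_of_eq_add_primitive (hF : IntegrableOn F (Ioc a b))
    (hv : ∀ t ∈ Icc a b, v t = v₀ + ∫ s in Ioc a t, F s) : ContinuousOn v (Icc a b) :=
  (continuousOn_const.add (intervalIntegral.continuousOn_primitive
    ((integrableOn_Icc_iff_integrableOn_Ioc).mpr hF))).congr hv

theorem integrableOn_inner_of_eq_add_primitive (hF : IntegrableOn F (Ioc a b))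
    (hv : ∀ t ∈ Icc a b, v t = v₀ + ∫ s in Ioc a t, F s) :
    IntegrableOn (fun s => ⟪F s, v s⟫) (Ioc a b) := by
  refine IntegrableOn.congr_fun ((hF.inner_const v₀).add (integrableOn_inner_primitive hF))
    (fun s hs => ?_) measurableSet_Ioc
  rw [hv s (Ioc_subset_Icc_self hs), inner_add_right, Pi.add_apply]

theorem sq_norm_eq_add_integral_inner [CompleteSpace H] (hab : a ≤ b)
    (hF : IntegrableOn F (Ioc a b)) (hv : ∀ t ∈ Icc a b, v t = v₀ + ∫ s in Ioc a t, F s) :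
    ‖v b‖ ^ 2 = ‖v₀‖ ^ 2 + 2 * ∫ s in Ioc a b, ⟪F s, v s⟫ := by
  have hsplit : ∫ s in Ioc a b, ⟪F s, v s⟫
      = ⟪v₀, ∫ s in Ioc a b, F s⟫ + ∫ s in Ioc a b, ⟪F s, ∫ r in Ioc a s, F r⟫ := by
    rw [← integral_inner hF, ← integral_add (hF.const_inner v₀) (integrableOn_inner_primitive hF)]
    refine setIntegral_congr_fun measurableSet_Ioc fun s hs => ?_
    rw [hv s (Ioc_subset_Icc_self hs), inner_add_right, real_inner_comm]
  rw [hv b (right_mem_Icc.mpr hab), norm_add_sq_real, hsplit, sq_norm_setIntegral_Ioc hF]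
  ring

end Hilbert

theorem le_add_sqrt_of_sq_le {m B K : ℝ} (h : m ^ 2 ≤ K + 2 * B * m) :
    m ≤ B + √(B ^ 2 + K) := by
  have hsq : (m - B) ^ 2 ≤ B ^ 2 + K := by nlinarith
  linarith [le_abs_self (m - B), Real.abs_le_sqrt hsq]

theorem norm_le_add_sqrt_of_inner_le_mul_norm {H : Type*} [NormedAddCommGroup H]
    [InnerProductSpace ℝ H] [CompleteSpace H] {F v : ℝ → H} {v₀ : H} {k : ℝ → ℝ} {a b B : ℝ}
    (hab : a ≤ b) (hF : IntegrableOn F (Ioc a b))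
    (hv : ∀ t ∈ Icc a b, v t = v₀ + ∫ s in Ioc a t, F s)
    (hk : IntegrableOn k (Ioc a b)) (hk₀ : ∀ s ∈ Ioc a b, 0 ≤ k s)
    (hkB : ∫ s in Ioc a b, k s ≤ B) (hFv : ∀ s ∈ Ioc a b, ⟪F s, v s⟫ ≤ k s * ‖v s‖) :
    ‖v b‖ ≤ B + √(B ^ 2 + ‖v₀‖ ^ 2) := by
  -- apply the energy identity at a point `c` where `‖v‖` is maximal on `[a, b]`
  obtain ⟨c, hc, hmax⟩ := isCompact_Icc.exists_isMaxOn (nonempty_Icc.mpr hab)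
    (continuousOn_of_eq_add_primitive hF hv).norm
  have hvc : ∀ t ∈ Icc a c, v t = v₀ + ∫ s in Ioc a t, F s := fun t ht =>
    hv t ⟨ht.1, ht.2.trans hc.2⟩
  have hac : Ioc a c ⊆ Ioc a b := Ioc_subset_Ioc_right hc.2
  have hkc : ∫ s in Ioc a c, k s ≤ B := (setIntegral_mono_set hk
    (ae_restrict_of_forall_mem measurableSet_Ioc hk₀) hac.eventuallyLE).trans hkB
  have hinner : ∫ s in Ioc a c, ⟪F s, v s⟫ ≤ (∫ s in Ioc a c, k s) * ‖v c‖ := by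
    rw [← integral_mul_const]
    refine setIntegral_mono_on (integrableOn_inner_of_eq_add_primitive (hF.mono_set hac) hvc)
      ((hk.mono_set hac).mul_const _) measurableSet_Ioc fun s hs => ?_
    exact (hFv s (hac hs)).trans
      (mul_le_mul_of_nonneg_left (hmax (Ioc_subset_Icc_self (hac hs))) (hk₀ s (hac hs)))
  have hm : ‖v c‖ ^ 2 ≤ ‖v₀‖ ^ 2 + 2 * B * ‖v c‖ := by
    rw [sq_norm_eq_add_integral_inner hc.1 (hF.mono_set hac) hvc]
    nlinarith [norm_nonneg (v c)]
  exact (hmax (right_mem_Icc.mpr hab)).trans (le_add_sqrt_of_sq_le hm)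

theorem integrableOn_Ioi_of_setIntegral_Ioc_le {ρ : ℝ → ℝ} {a C : ℝ}
    (hρ : ∀ b, a ≤ b → IntegrableOn ρ (Ioc a b)) (hρ₀ : ∀ s, a < s → 0 ≤ ρ s)
    (hC : ∀ b, a ≤ b → ∫ s in Ioc a b, ρ s ≤ C) : IntegrableOn ρ (Ioi a) := by
  refine integrableOn_Ioi_of_intervalIntegral_norm_bounded C a (l := atTop) (b := id)
    (fun b => ?_) tendsto_id ?_
  · rcases le_or_gt a b with hab | hab
    · exact hρ b hab
    · simp [Ioc_eq_empty_of_le hab.le]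
  · filter_upwards [eventually_ge_atTop a] with b hb
    rw [id, intervalIntegral.integral_of_le hb,
      setIntegral_congr_fun measurableSet_Ioc fun s hs => Real.norm_of_nonneg (hρ₀ s hs.1)]
    exact hC b hb

theorem setLIntegral_ofReal_Ioi_lt_top_of_inner_le {H : Type*} [NormedAddCommGroup H]
    [InnerProductSpace ℝ H] [CompleteSpace H] {F v : ℝ → H} {v₀ : H} {g k : ℝ → ℝ} {a : ℝ}
    (hF : ∀ b, a ≤ b → IntegrableOn F (Ioc a b))
    (hv : ∀ t, a ≤ t → v t = v₀ + ∫ s in Ioc a t, F s)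
    (hk : IntegrableOn k (Ioi a)) (hk₀ : ∀ s, a < s → 0 ≤ k s) (hg₀ : ∀ s, a < s → 0 ≤ g s)
    (hFv : ∀ s, a < s → g s / 2 + ⟪F s, v s⟫ ≤ k s * ‖v s‖) :
    ∫⁻ s in Ioi a, ENNReal.ofReal (g s) < ⊤ := by
  set B := ∫ s in Ioi a, k s
  set M := B + √(B ^ 2 + ‖v₀‖ ^ 2)
  have hvb : ∀ b, ∀ t ∈ Icc a b, v t = v₀ + ∫ s in Ioc a t, F s := fun _ t ht => hv t ht.1
  have hk₀' : 0 ≤ᵐ[volume.restrict (Ioi a)] k := ae_restrict_of_forall_mem measurableSet_Ioi hk₀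
  have hkB : ∀ b, ∫ s in Ioc a b, k s ≤ B := fun b =>
    setIntegral_mono_set hk hk₀' Ioc_subset_Ioi_self.eventuallyLE
  have hM₀ : 0 ≤ M := add_nonneg (setIntegral_nonneg measurableSet_Ioi hk₀) (Real.sqrt_nonneg _)
  have hM : ∀ t, a ≤ t → ‖v t‖ ≤ M := fun t ht =>
    norm_le_add_sqrt_of_inner_le_mul_norm ht (hF t ht) (hvb t) (hk.mono_set Ioc_subset_Ioi_self)
      (fun s hs => hk₀ s hs.1) (hkB t) (fun s hs => by linarith [hFv s hs.1, hg₀ s hs.1])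
  -- `T ∘ u` need not be measurable, so the dissipation is compared with an integrable majorant
  set ρ := fun s => 2 * (M * k s - ⟪F s, v s⟫)
  have hgρ : ∀ s, a < s → g s ≤ ρ s := fun s hs => by
    nlinarith [hFv s hs, mul_le_mul_of_nonneg_left (hM s hs.le) (hk₀ s hs)]
  have hρ_int : ∀ b, a ≤ b → IntegrableOn ρ (Ioc a b) := fun b hb =>
    (((hk.mono_set Ioc_subset_Ioi_self).const_mul M).sub
      (integrableOn_inner_of_eq_add_primitive (hF b hb) (hvb b))).const_mul 2
  have hρ_le : ∀ b, a ≤ b → ∫ s in Ioc a b, ρ s ≤ 2 * M * B + ‖v₀‖ ^ 2 := fun b hb => by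
    have henergy := sq_norm_eq_add_integral_inner hb (hF b hb) (hvb b)
    rw [integral_const_mul, integral_sub ((hk.mono_set Ioc_subset_Ioi_self).const_mul M)
      (integrableOn_inner_of_eq_add_primitive (hF b hb) (hvb b)), integral_const_mul]
    nlinarith [mul_le_mul_of_nonneg_left (hkB b) hM₀, sq_nonneg ‖v b‖]
  calc ∫⁻ s in Ioi a, ENNReal.ofReal (g s) ≤ ∫⁻ s in Ioi a, ENNReal.ofReal (ρ s) :=
        setLIntegral_mono' measurableSet_Ioi fun s hs => ENNReal.ofReal_le_ofReal (hgρ s hs)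
    _ < ⊤ := (integrableOn_Ioi_of_setIntegral_Ioc_le hρ_int
        (fun s hs => (hg₀ s hs).trans (hgρ s hs)) hρ_le).lintegral_lt_top

theorem stmt_0_general
    {H : Type*} [NormedAddCommGroup H] [InnerProductSpace ℝ H] [CompleteSpace H]
    (T : H → H)
    (hT : ∀ (y x : H), T x = x → ‖T y - x‖ ≤ ‖y - x‖)
    (hfix : ∃ x : H, T x = x)
    (t₀ : ℝ)
    (θ : ℝ → ℝ) (hθ : ∀ t, t₀ ≤ t → 0 ≤ θ t)
    (f : ℝ → H)
    (hfint : IntegrableOn (fun s => ‖f s‖) (Set.Ici t₀))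
    (u : ℝ → H) (u₀ : H)
    (huint : ∀ t, t₀ ≤ t →
      IntervalIntegrable (fun s => θ s • (T (u s) - u s) + f s) volume t₀ t)
    (husol : ∀ t, t₀ ≤ t →
      u t = u₀ + ∫ s in t₀..t, (θ s • (T (u s) - u s) + f s)) :
    ∫⁻ s in Set.Ici t₀, ENNReal.ofReal (θ s * ‖T (u s) - u s‖ ^ 2) < ⊤ := by
  obtain ⟨x, hx⟩ := hfix
  rw [← setLIntegral_congr Ioi_ae_eq_Ici]
  refine setLIntegral_ofReal_Ioi_lt_top_of_inner_le (v := fun t => u t - x) (v₀ := u₀ - x)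
    (fun b hb => (intervalIntegrable_iff_integrableOn_Ioc_of_le hb).mp (huint b hb))
    (fun t ht => ?_) (hfint.mono_set Ioi_subset_Ici_self) (fun s _ => norm_nonneg (f s))
    (fun s hs => mul_nonneg (hθ s hs.le) (sq_nonneg _))
    (fun s hs => inner_add_sq_norm_le_of_quasiNonexpansive hT hx (u s) (f s) (hθ s hs.le))
  rw [husol t ht, intervalIntegral.integral_of_le ht]
  abel

theorem stmt_0
    {H : Type*} [NormedAddCommGroup H] [InnerProductSpace ℝ H] [CompleteSpace H]
    (T : H → H)
    (hT : ∀ (y x : H), T x = x → ‖T y - x‖ ≤ ‖y - x‖)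
    (hfix : ∃ x : H, T x = x)
    (t₀ : ℝ) (ht₀ : 0 < t₀)
    (θ : ℝ → ℝ) (hθ : ∀ t, t₀ ≤ t → 0 ≤ θ t)
    (hθint : ∀ b : ℝ, IntervalIntegrable θ volume t₀ b)
    (f : ℝ → H)
    (hfint : IntegrableOn (fun s => ‖f s‖) (Set.Ici t₀))
    (u : ℝ → H) (u₀ : H)
    (huint : ∀ t, t₀ ≤ t →
      IntervalIntegrable (fun s => θ s • (T (u s) - u s) + f s) volume t₀ t)
    (husol : ∀ t, t₀ ≤ t →
      u t = u₀ + ∫ s in t₀..t, (θ s • (T (u s) - u s) + f s)) :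
    ∫⁻ s in Set.Ici t₀, ENNReal.ofReal (θ s * ‖T (u s) - u s‖ ^ 2) < ⊤ :=
  stmt_0_general T hT hfix t₀ θ hθ f hfint u u₀ huint husol
end

section
/- Let T : H → H be a quasi-nonexpansive operator with Fix(T) ≠ ∅, and let u be a strong global solution of the evolution equation u'(t) = θ(t)(T(u(t)) − u(t)) + f(t), u(t₀) = u₀. Then for every u* ∈ Fix(T) and every t ≥ t₀ one has ‖u(t) − u*‖ ≤ ‖u₀ − u*‖ + ∫_{t₀}^{t} ‖f(s)‖ ds; in particular the trajectory u is bounded on [t₀,∞). -/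
open MeasureTheory Filter Set
open scoped RealInnerProductSpace

/-!
Put `e = u - u*`. Quasi-nonexpansiveness gives `⟪e, θ (T u - u)⟫ ≤ 0`, hence
`⟪e, e'⟫ ≤ ‖e‖ ‖f‖` almost everywhere. The increments of `‖e‖` are dominated by those of the
primitive of `‖e'‖`, so `‖e‖` is absolutely continuous and is the integral of its a.e. derivative.
That derivative is at most `‖f‖`: where `e ≠ 0` because `‖e‖ ‖e‖' = ⟪e, e'⟫`, and where `e = 0`
because `‖e‖` has a minimum there.
-/

theorem AbsolutelyContinuousOnInterval.of_dist_le {X Y : Type*} [PseudoMetricSpace X]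
    [PseudoMetricSpace Y] {f : ℝ → X} {G : ℝ → Y} {a b : ℝ}
    (hG : AbsolutelyContinuousOnInterval G a b)
    (hfG : ∀ x ∈ uIcc a b, ∀ y ∈ uIcc a b, dist (f x) (f y) ≤ dist (G x) (G y)) :
    AbsolutelyContinuousOnInterval f a b := by
  refine squeeze_zero' (Eventually.of_forall fun _ ↦ Finset.sum_nonneg fun _ _ ↦ dist_nonneg)
    ?_ hG
  filter_upwards [mem_inf_of_right (mem_principal_self _)] with E hE
  exact Finset.sum_le_sum fun i hi ↦ hfG _ (hE.1 i hi).1 _ (hE.1 i hi).2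

theorem IntervalIntegrable.absolutelyContinuousOnInterval_primitive
    {E : Type*} [NormedAddCommGroup E] [NormedSpace ℝ E] {g : ℝ → E} {a b c : ℝ}
    (hg : IntervalIntegrable g volume a b) (hc : c ∈ uIcc a b) :
    AbsolutelyContinuousOnInterval (fun x ↦ ∫ s in c..x, g s) a b := by
  refine (hg.norm.absolutelyContinuousOnInterval_intervalIntegral hc).of_dist_le
    fun x hx y hy ↦ ?_
  have hint : ∀ z ∈ uIcc a b, IntervalIntegrable g volume c z :=
    fun z hz ↦ hg.mono_set (uIcc_subset_uIcc hc hz)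
  rw [dist_eq_norm, dist_eq_norm, Real.norm_eq_abs,
    intervalIntegral.integral_interval_sub_left (hint x hx) (hint y hy),
    intervalIntegral.integral_interval_sub_left (hint x hx).norm (hint y hy).norm]
  exact intervalIntegral.norm_integral_le_abs_integral_norm

section InnerProductSpace

variable {E : Type*} [NormedAddCommGroup E] [InnerProductSpace ℝ E]

theorem inner_sub_sub_nonpos_of_norm_sub_le {y z p : E} (h : ‖z - p‖ ≤ ‖y - p‖) :
    ⟪y - p, z - y⟫ ≤ 0 := by
  have hsq := norm_add_sq_real (y - p) (z - y)
  rw [sub_add_sub_cancel'] at hsq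
  nlinarith [norm_nonneg (z - p), norm_nonneg (y - p), sq_nonneg ‖z - y‖]

theorem norm_mul_deriv_norm_eq_inner {e : ℝ → E} {e' : E} {x : ℝ} (he : HasDerivAt e e' x)
    (hn : DifferentiableAt ℝ (fun t ↦ ‖e t‖) x) :
    ‖e x‖ * deriv (fun t ↦ ‖e t‖) x = ⟪e x, e'⟫ := by
  have h := (hn.hasDerivAt.pow 2).unique he.norm_sq
  simp only [Nat.cast_ofNat, Nat.add_one_sub_one, pow_one] at h
  linarith

theorem deriv_norm_le_of_inner_le {e : ℝ → E} {e' : E} {x c : ℝ} (he : HasDerivAt e e' x)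
    (hn : DifferentiableAt ℝ (fun t ↦ ‖e t‖) x) (hc : 0 ≤ c) (hinner : ⟪e x, e'⟫ ≤ ‖e x‖ * c) :
    deriv (fun t ↦ ‖e t‖) x ≤ c := by
  rcases (norm_nonneg (e x)).eq_or_lt with h0 | hpos
  · have hmin : IsLocalMin (fun t ↦ ‖e t‖) x :=
      Eventually.of_forall fun t ↦ show ‖e x‖ ≤ ‖e t‖ from h0 ▸ norm_nonneg (e t)
    exact hmin.deriv_eq_zero ▸ hc
  · rw [← norm_mul_deriv_norm_eq_inner he hn] at hinner
    exact le_of_mul_le_mul_left hinner hpos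

theorem norm_le_add_integral_of_inner_le [CompleteSpace E] {e g : ℝ → E} {h : ℝ → ℝ} {a b : ℝ}
    (hab : a ≤ b) (hg : IntervalIntegrable g volume a b)
    (he : ∀ t ∈ Icc a b, e t = e a + ∫ s in a..t, g s)
    (hh : IntervalIntegrable h volume a b) (hh_nonneg : ∀ s ∈ Icc a b, 0 ≤ h s)
    (hinner : ∀ s ∈ Icc a b, ⟪e s, g s⟫ ≤ ‖e s‖ * h s) :
    ‖e b‖ ≤ ‖e a‖ + ∫ s in a..b, h s := by
  have he_ac : AbsolutelyContinuousOnInterval e a b :=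
    (hg.absolutelyContinuousOnInterval_primitive left_mem_uIcc).of_dist_le fun x hx y hy ↦ by
      rw [uIcc_of_le hab] at hx hy
      rw [he x hx, he y hy, dist_add_left]
  have hN : AbsolutelyContinuousOnInterval (fun t ↦ ‖e t‖) a b :=
    he_ac.of_dist_le fun x _ y _ ↦ (dist_norm_norm_le _ _).trans_eq (dist_eq_norm _ _).symm
  have hderiv : ∀ᵐ x ∂volume.restrict (Icc a b), deriv (fun t ↦ ‖e t‖) x ≤ h x := by
    rw [ae_restrict_iff' measurableSet_Icc]
    filter_upwards [hN.ae_differentiableAt, hg.ae_hasDerivAt_integral,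
      volume.ae_ne a, volume.ae_ne b] with x hxN hxe hxa hxb hx
    have hxI : x ∈ uIcc a b := Icc_subset_uIcc hx
    have hx' : x ∈ Ioo a b := ⟨lt_of_le_of_ne hx.1 hxa.symm, lt_of_le_of_ne hx.2 hxb⟩
    have hex : HasDerivAt e (g x) x :=
      ((hxe hxI a left_mem_uIcc).const_add (e a)).congr_of_eventuallyEq <|
        eventually_of_mem (Ioo_mem_nhds hx'.1 hx'.2) fun t ht ↦ he t (Ioo_subset_Icc_self ht)
    exact deriv_norm_le_of_inner_le hex (hxN hxI) (hh_nonneg x hx) (hinner x hx)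
  have hint := intervalIntegral.integral_mono_ae_restrict hab hN.intervalIntegrable_deriv hh hderiv
  rw [hN.integral_deriv_eq_sub] at hint
  linarith

end InnerProductSpace

theorem stmt_1_general
    {H : Type*} [NormedAddCommGroup H] [InnerProductSpace ℝ H] [CompleteSpace H]
    (T : H → H)
    (hT : ∀ (y x : H), T x = x → ‖T y - x‖ ≤ ‖y - x‖)
    (t₀ : ℝ)
    (θ : ℝ → ℝ) (hθ : ∀ t, t₀ ≤ t → 0 ≤ θ t)
    (f : ℝ → H)
    (hfint : IntegrableOn (fun s => ‖f s‖) (Set.Ici t₀))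
    (u : ℝ → H) (u₀ : H)
    (huint : ∀ t, t₀ ≤ t →
      IntervalIntegrable (fun s => θ s • (T (u s) - u s) + f s) volume t₀ t)
    (husol : ∀ t, t₀ ≤ t →
      u t = u₀ + ∫ s in t₀..t, (θ s • (T (u s) - u s) + f s)) :
    ∀ ustar : H, T ustar = ustar → ∀ t, t₀ ≤ t →
      ‖u t - ustar‖ ≤ ‖u₀ - ustar‖ + ∫ s in t₀..t, ‖f s‖ := by
  intro ustar hstar t ht
  have hu₀ : u t₀ = u₀ := by simpa using husol t₀ le_rfl
  have hinner : ∀ s ∈ Icc t₀ t,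
      ⟪u s - ustar, θ s • (T (u s) - u s) + f s⟫ ≤ ‖u s - ustar‖ * ‖f s‖ := by
    intro s hs
    rw [inner_add_right, real_inner_smul_right]
    nlinarith [hθ s hs.1, inner_sub_sub_nonpos_of_norm_sub_le (hT (u s) ustar hstar),
      real_inner_le_norm (u s - ustar) (f s)]
  have hf : IntervalIntegrable (fun s => ‖f s‖) volume t₀ t :=
    (intervalIntegrable_iff_integrableOn_Ioc_of_le ht).mpr
      (hfint.mono_set fun _ hs ↦ le_of_lt hs.1)
  simpa [hu₀] using norm_le_add_integral_of_inner_le (e := fun s ↦ u s - ustar) ht (huint t ht)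
    (fun s hs ↦ by rw [husol s hs.1, hu₀]; abel) hf (fun s _ ↦ norm_nonneg (f s)) hinner

theorem stmt_1
    {H : Type*} [NormedAddCommGroup H] [InnerProductSpace ℝ H] [CompleteSpace H]
    (T : H → H)
    (hT : ∀ (y x : H), T x = x → ‖T y - x‖ ≤ ‖y - x‖)
    (hfix : ∃ x : H, T x = x)
    (t₀ : ℝ) (ht₀ : 0 < t₀)
    (θ : ℝ → ℝ) (hθ : ∀ t, t₀ ≤ t → 0 ≤ θ t)
    (hθint : ∀ b : ℝ, IntervalIntegrable θ volume t₀ b)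
    (f : ℝ → H)
    (hfint : IntegrableOn (fun s => ‖f s‖) (Set.Ici t₀))
    (u : ℝ → H) (u₀ : H)
    (huint : ∀ t, t₀ ≤ t →
      IntervalIntegrable (fun s => θ s • (T (u s) - u s) + f s) volume t₀ t)
    (husol : ∀ t, t₀ ≤ t →
      u t = u₀ + ∫ s in t₀..t, (θ s • (T (u s) - u s) + f s)) :
    ∀ ustar : H, T ustar = ustar → ∀ t, t₀ ≤ t →
      ‖u t - ustar‖ ≤ ‖u₀ - ustar‖ + ∫ s in t₀..t, ‖f s‖ :=
  stmt_1_general T hT t₀ θ hθ f hfint u u₀ huint husol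
end

section
/- Let T : H → H be a quasi-nonexpansive operator with Fix(T) ≠ ∅, and let u be a strong global solution of the evolution equation u'(t) = θ(t)(T(u(t)) − u(t)) + f(t), u(t₀) = u₀. If T is uniformly continuous on H and inf_{t ≥ t₀} θ(t) > 0, then lim_{t→∞} ‖T(u(t)) − u(t)‖ = 0. -/
open MeasureTheory Filter Set
open scoped RealInnerProductSpace Topology

/-!
Fix `p ∈ Fix T` and write `g = ‖T u - u‖`. Quasi-nonexpansiveness at `p` gives
`2 ⟪u - p, T u - u⟫ ≤ -g²`, so along the absolutely continuous trajectory
`d/dt ‖u - p‖² ≤ -θ g² + 2 ‖f‖ ‖u - p‖`. Since `‖f‖` is integrable, `‖u - p‖` stays bounded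
and the dissipation `θ g²` is integrable on `[t₀, ∞)`.

If `g x ≥ ε` at a late time `x`, uniform continuity of `T - id` keeps `g ≥ ε / 2` while `u`
stays in a ball `B(u x, η)`. There `θ g ≤ (2 / ε) θ g²`, so the small tails of `∫ θ g²` and
`∫ ‖f‖` bound the displacement `∫ (θ g + ‖f‖)` by less than `η`: `u` never leaves the ball.
Then `θ g² ≥ c ε² / 4` on `[x, ∞)`, contradicting the integrability of the dissipation.
-/

section QuasiNonexpansive

variable {H : Type*} [NormedAddCommGroup H] [InnerProductSpace ℝ H]

theorem two_inner_sub_le_neg_norm_sq {x y p : H} (h : ‖x - p‖ ≤ ‖y - p‖) :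
    2 * ⟪x - y, y - p⟫ ≤ -‖x - y‖ ^ 2 := by
  have hsq := norm_add_sq_real (x - y) (y - p)
  rw [sub_add_sub_cancel] at hsq
  nlinarith [pow_le_pow_left₀ (norm_nonneg _) h 2]

theorem two_inner_sub_smul_add_le {x y p z : H} {θ : ℝ} (hθ : 0 ≤ θ) (h : ‖x - p‖ ≤ ‖y - p‖) :
    2 * ⟪y - p, θ • (x - y) + z⟫ ≤ 2 * (‖z‖ * ‖y - p‖) - θ * ‖x - y‖ ^ 2 := by
  rw [inner_add_right, real_inner_smul_right, real_inner_comm (x - y), real_inner_comm z]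
  nlinarith [mul_le_mul_of_nonneg_left (two_inner_sub_le_neg_norm_sq h) hθ,
    real_inner_le_norm z (y - p)]

end QuasiNonexpansive

theorem AbsolutelyContinuousOnInterval.of_dist_le_mul {X Y : Type*} [PseudoMetricSpace X]
    [PseudoMetricSpace Y] {f : ℝ → X} {g : ℝ → Y} {a b : ℝ} (C : ℝ)
    (hg : AbsolutelyContinuousOnInterval g a b)
    (hfg : ∀ x ∈ uIcc a b, ∀ y ∈ uIcc a b, dist (f x) (f y) ≤ C * dist (g x) (g y)) :
    AbsolutelyContinuousOnInterval f a b := by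
  unfold AbsolutelyContinuousOnInterval at hg ⊢
  refine squeeze_zero' (.of_forall fun _ ↦ Finset.sum_nonneg fun _ _ ↦ dist_nonneg) ?_
    (by simpa using hg.const_mul C)
  rw [eventually_inf_principal]
  filter_upwards with ⟨n, I⟩ hnI
  rw [Finset.mul_sum]
  exact Finset.sum_le_sum fun i hi ↦ hfg _ (hnI.1 i hi).1 _ (hnI.1 i hi).2

section Primitive

variable {H : Type*} [NormedAddCommGroup H] [InnerProductSpace ℝ H]
  {v G : ℝ → H} {a b : ℝ}

theorem absolutelyContinuousOnInterval_norm_sq_of_eq_add_integral (hab : a ≤ b)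
    (hG : IntervalIntegrable G volume a b) (hv : ∀ x ∈ Icc a b, v x = v a + ∫ s in a..x, G s) :
    AbsolutelyContinuousOnInterval (fun x ↦ ‖v x‖ ^ 2) a b := by
  rw [← uIcc_of_le hab] at hv
  have hGx : ∀ x ∈ uIcc a b, IntervalIntegrable G volume a x :=
    fun x hx ↦ hG.mono_set (uIcc_subset_uIcc_left hx)
  have hvc : ContinuousOn v (uIcc a b) :=
    (continuousOn_const.add
      (intervalIntegral.continuousOn_primitive_interval' hG left_mem_uIcc)).congr hv
  obtain ⟨M, hM⟩ := isCompact_uIcc.exists_bound_of_continuousOn hvc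
  have hM0 : 0 ≤ M := (norm_nonneg _).trans (hM a left_mem_uIcc)
  refine .of_dist_le_mul (2 * M)
    (hG.norm.absolutelyContinuousOnInterval_intervalIntegral left_mem_uIcc) fun x hx y hy ↦ ?_
  have hxy : v x - v y = ∫ s in y..x, G s := by
    rw [hv x hx, hv y hy, add_sub_add_left_eq_sub,
      intervalIntegral.integral_interval_sub_left (hGx x hx) (hGx y hy)]
  have hF : dist (∫ s in a..x, ‖G s‖) (∫ s in a..y, ‖G s‖) = |∫ s in y..x, ‖G s‖| := by
    rw [Real.dist_eq, intervalIntegral.integral_interval_sub_left (hGx x hx).norm (hGx y hy).norm]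
  calc dist (‖v x‖ ^ 2) (‖v y‖ ^ 2) = |‖v x‖ - ‖v y‖| * (‖v x‖ + ‖v y‖) := by
        rw [Real.dist_eq, sq_sub_sq, abs_mul, abs_of_nonneg (by positivity), mul_comm]
    _ ≤ ‖v x - v y‖ * (2 * M) :=
        mul_le_mul (abs_norm_sub_norm_le _ _) (by linarith [hM x hx, hM y hy]) (by positivity)
          (norm_nonneg _)
    _ ≤ |∫ s in y..x, ‖G s‖| * (2 * M) := by
        rw [hxy]; gcongr; exact intervalIntegral.norm_integral_le_abs_integral_norm
    _ = 2 * M * dist (∫ s in a..x, ‖G s‖) (∫ s in a..y, ‖G s‖) := by rw [hF, mul_comm]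

theorem ae_deriv_norm_sq_eq_of_eq_add_integral [CompleteSpace H] (hab : a ≤ b)
    (hG : IntervalIntegrable G volume a b) (hv : ∀ x ∈ Icc a b, v x = v a + ∫ s in a..x, G s) :
    ∀ᵐ x, x ∈ uIoc a b → deriv (fun x ↦ ‖v x‖ ^ 2) x = 2 * ⟪v x, G x⟫ := by
  have hb : ∀ᵐ x, x ≠ b := by simp [ae_iff, measure_singleton]
  filter_upwards [hG.ae_hasDerivAt_integral, hb] with x hx hxb hxI
  rw [uIoc_of_le hab] at hxI
  have hnhds : Icc a b ∈ 𝓝 x := Icc_mem_nhds hxI.1 (lt_of_le_of_ne hxI.2 hxb)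
  have hxI' : x ∈ uIcc a b := by rw [uIcc_of_le hab]; exact Ioc_subset_Icc_self hxI
  have hder : HasDerivAt v (G x) x :=
    ((hx hxI' a left_mem_uIcc).const_add (v a)).congr_of_eventuallyEq
      (eventually_of_mem hnhds hv)
  exact hder.norm_sq.deriv

theorem intervalIntegrable_two_inner_of_eq_add_integral [CompleteSpace H] (hab : a ≤ b)
    (hG : IntervalIntegrable G volume a b) (hv : ∀ x ∈ Icc a b, v x = v a + ∫ s in a..x, G s) :
    IntervalIntegrable (fun x ↦ 2 * ⟪v x, G x⟫) volume a b :=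
  (absolutelyContinuousOnInterval_norm_sq_of_eq_add_integral hab hG hv).intervalIntegrable_deriv
    |>.congr_ae <| (ae_restrict_iff' measurableSet_uIoc).mpr
      (ae_deriv_norm_sq_eq_of_eq_add_integral hab hG hv)

theorem integral_two_inner_eq_of_eq_add_integral [CompleteSpace H] (hab : a ≤ b)
    (hG : IntervalIntegrable G volume a b) (hv : ∀ x ∈ Icc a b, v x = v a + ∫ s in a..x, G s) :
    ∫ x in a..b, 2 * ⟪v x, G x⟫ = ‖v b‖ ^ 2 - ‖v a‖ ^ 2 := by
  rw [← (absolutelyContinuousOnInterval_norm_sq_of_eq_add_integral hab hG hv).integral_deriv_eq_sub]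
  exact intervalIntegral.integral_congr_ae
    ((ae_deriv_norm_sq_eq_of_eq_add_integral hab hG hv).mono fun x hx hxI ↦ (hx hxI).symm)

end Primitive

theorem continuousOn_Ici_of_eq_add_integral {E : Type*} [NormedAddCommGroup E] [NormedSpace ℝ E]
    {u G : ℝ → E} {t₀ : ℝ} {u₀ : E} (hG : ∀ t, t₀ ≤ t → IntervalIntegrable G volume t₀ t)
    (hu : ∀ t, t₀ ≤ t → u t = u₀ + ∫ s in t₀..t, G s) : ContinuousOn u (Ici t₀) := by
  intro x hx
  have hx1 : t₀ ≤ x + 1 := by linarith [mem_Ici.mp hx]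
  have hc : ContinuousOn u (Icc t₀ (x + 1)) := by
    rw [← uIcc_of_le hx1]
    exact (continuousOn_const.add (intervalIntegral.continuousOn_primitive_interval'
      (hG _ hx1) left_mem_uIcc)).congr fun t ht ↦ hu t (uIcc_of_le hx1 ▸ ht).1
  refine (hc x ⟨hx, by linarith⟩).mono_of_mem_nhdsWithin ?_
  rw [← Ici_inter_Iic]
  exact inter_mem self_mem_nhdsWithin (mem_nhdsWithin_of_mem_nhds (Iic_mem_nhds (lt_add_one x)))

theorem forall_lt_of_forall_Ico_lt {d : ℝ → ℝ} {x η : ℝ} (hd : ContinuousOn d (Ici x))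
    (h : ∀ s, x ≤ s → (∀ r ∈ Ico x s, d r < η) → d s < η) : ∀ s, x ≤ s → d s < η := by
  by_contra! hne
  obtain ⟨s₁, hs₁x, hs₁⟩ := hne
  set S := Ici x ∩ d ⁻¹' Ici η
  have hbdd : BddBelow S := ⟨x, fun s hs ↦ hs.1⟩
  have hs₀ : sInf S ∈ S :=
    (hd.preimage_isClosed_of_isClosed isClosed_Ici isClosed_Ici).csInf_mem ⟨s₁, hs₁x, hs₁⟩ hbdd
  refine not_lt.mpr hs₀.2 (h _ hs₀.1 fun r hr ↦ not_le.mp fun hle ↦ ?_)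
  exact hr.2.not_ge (csInf_le hbdd ⟨hr.1, hle⟩)

theorem intervalIntegral_le_setIntegral_Ici {ψ : ℝ → ℝ} {a b : ℝ} (hab : a ≤ b)
    (hψ : IntegrableOn ψ (Ici a)) (hψ0 : ∀ t, a ≤ t → 0 ≤ ψ t) :
    ∫ s in a..b, ψ s ≤ ∫ s in Ici a, ψ s := by
  rw [intervalIntegral.integral_of_le hab]
  exact setIntegral_mono_set hψ ((ae_restrict_iff' measurableSet_Ici).mpr (.of_forall hψ0))
    (Ioc_subset_Ioi_self.trans Ioi_subset_Ici_self).eventuallyLE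

theorem eventually_forall_intervalIntegral_lt {ψ : ℝ → ℝ} {t₀ ε : ℝ}
    (hψ : IntegrableOn ψ (Ici t₀)) (hψ0 : ∀ t, t₀ ≤ t → 0 ≤ ψ t) (hε : 0 < ε) :
    ∀ᶠ a in atTop, ∀ b, a ≤ b → ∫ s in a..b, ψ s < ε := by
  have htail : Tendsto (fun a ↦ ∫ s in Ici a, ψ s) atTop (𝓝 0) := by
    have h := tendsto_setIntegral_of_antitone (μ := volume) (f := ψ)
      (fun _ ↦ measurableSet_Ici) antitone_Ici ⟨t₀, hψ⟩
    rwa [iInter_eq_empty_iff.mpr fun x ↦ ⟨x + 1, by simp⟩, setIntegral_empty] at h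
  filter_upwards [htail.eventually (gt_mem_nhds hε), eventually_ge_atTop t₀]
    with a ha hat b hab
  exact (intervalIntegral_le_setIntegral_Ici hab (hψ.mono_set (Ici_subset_Ici.mpr hat))
    fun t ht ↦ hψ0 t (hat.trans ht)).trans_lt ha

theorem integrableOn_Ici_of_intervalIntegral_le {ψ : ℝ → ℝ} {t₀ C : ℝ}
    (hψi : ∀ b, t₀ ≤ b → IntervalIntegrable ψ volume t₀ b) (hψ0 : ∀ t, t₀ ≤ t → 0 ≤ ψ t)
    (hC : ∀ b, t₀ ≤ b → ∫ s in t₀..b, ψ s ≤ C) : IntegrableOn ψ (Ici t₀) := by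
  rw [integrableOn_Ici_iff_integrableOn_Ioi]
  refine integrableOn_Ioi_of_intervalIntegral_norm_bounded C t₀ (b := fun i ↦ max t₀ i)
    (fun i ↦ (hψi _ (le_max_left _ _)).1) (tendsto_atTop_mono (le_max_right t₀) tendsto_id)
    (.of_forall fun i ↦ ?_)
  rw [intervalIntegral.integral_congr fun s hs ↦ Real.norm_of_nonneg
    (hψ0 s (uIcc_of_le (le_max_left t₀ i) ▸ hs).1)]
  exact hC _ (le_max_left _ _)

theorem intervalIntegrable_mul_of_continuousOn_Ici {θ h : ℝ → ℝ} {t₀ : ℝ}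
    (hθ : ∀ b, IntervalIntegrable θ volume t₀ b) (hh : ContinuousOn h (Ici t₀)) (a b : ℝ)
    (ha : t₀ ≤ a) (hab : a ≤ b) : IntervalIntegrable (fun s ↦ θ s * h s) volume a b :=
  ((hθ b).mono_set (uIcc_subset_uIcc (mem_uIcc_of_le ha hab) right_mem_uIcc)).mul_continuousOn
    (hh.mono (uIcc_of_le hab ▸ Icc_subset_Ici_self.trans (Ici_subset_Ici.mpr ha)))

theorem intervalIntegral_mul_le_setIntegral_mul {φ y : ℝ → ℝ} {t₀ b M : ℝ} (hb : t₀ ≤ b)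
    (hφ : IntegrableOn φ (Ici t₀)) (hφ0 : ∀ t, t₀ ≤ t → 0 ≤ φ t) (hy : ContinuousOn y (Icc t₀ b))
    (hyM : ∀ t ∈ Icc t₀ b, y t ≤ M) (hM : 0 ≤ M) :
    ∫ s in t₀..b, φ s * y s ≤ (∫ s in Ici t₀, φ s) * M := by
  rw [← uIcc_of_le hb] at hy
  have hφb : IntervalIntegrable φ volume t₀ b :=
    (hφ.mono_set (uIcc_of_le hb ▸ Icc_subset_Ici_self)).intervalIntegrable
  calc ∫ s in t₀..b, φ s * y s ≤ ∫ s in t₀..b, φ s * M :=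
        intervalIntegral.integral_mono_on hb (hφb.mul_continuousOn hy) (hφb.mul_const M)
          fun s hs ↦ mul_le_mul_of_nonneg_left (hyM s hs) (hφ0 s hs.1)
    _ = (∫ s in t₀..b, φ s) * M := intervalIntegral.integral_mul_const _ _
    _ ≤ (∫ s in Ici t₀, φ s) * M :=
        mul_le_mul_of_nonneg_right (intervalIntegral_le_setIntegral_Ici hb hφ hφ0) hM

theorem le_add_two_mul_setIntegral_of_sq_le {y φ : ℝ → ℝ} {t₀ : ℝ} (hy : ContinuousOn y (Ici t₀))
    (hy0 : ∀ t, t₀ ≤ t → 0 ≤ y t) (hφ : IntegrableOn φ (Ici t₀)) (hφ0 : ∀ t, t₀ ≤ t → 0 ≤ φ t)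
    (h : ∀ b, t₀ ≤ b → y b ^ 2 ≤ y t₀ ^ 2 + 2 * ∫ s in t₀..b, φ s * y s) :
    ∀ b, t₀ ≤ b → y b ≤ y t₀ + 2 * ∫ s in Ici t₀, φ s := by
  intro b hb
  obtain ⟨m, hm, hmax⟩ :=
    isCompact_Icc.exists_isMaxOn (nonempty_Icc.mpr hb) (hy.mono Icc_subset_Ici_self)
  have hint := intervalIntegral_mul_le_setIntegral_mul hm.1 hφ hφ0 (hy.mono Icc_subset_Ici_self)
    (fun t ht ↦ hmax ⟨ht.1, ht.2.trans hm.2⟩) (hy0 m hm.1)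
  have hΦ : 0 ≤ ∫ s in Ici t₀, φ s := setIntegral_nonneg measurableSet_Ici hφ0
  have hym : y t₀ ≤ y m := hmax ⟨le_rfl, hb⟩
  have hm_le : y m ≤ y t₀ + 2 * ∫ s in Ici t₀, φ s := by
    nlinarith [h m hm.1, hy0 t₀ le_rfl]
  exact (hmax ⟨hb, le_rfl⟩ : y b ≤ y m).trans hm_le

theorem integrableOn_Ici_of_sq_add_integral_le {y φ ψ : ℝ → ℝ} {t₀ : ℝ}
    (hy : ContinuousOn y (Ici t₀)) (hy0 : ∀ t, t₀ ≤ t → 0 ≤ y t)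
    (hφ : IntegrableOn φ (Ici t₀)) (hφ0 : ∀ t, t₀ ≤ t → 0 ≤ φ t)
    (hψ : ∀ b, t₀ ≤ b → IntervalIntegrable ψ volume t₀ b) (hψ0 : ∀ t, t₀ ≤ t → 0 ≤ ψ t)
    (h : ∀ b, t₀ ≤ b → y b ^ 2 + ∫ s in t₀..b, ψ s ≤ y t₀ ^ 2 + 2 * ∫ s in t₀..b, φ s * y s) :
    IntegrableOn ψ (Ici t₀) := by
  have hbdd := le_add_two_mul_setIntegral_of_sq_le hy hy0 hφ hφ0 fun b hb ↦ by
    linarith [h b hb, intervalIntegral.integral_nonneg (μ := volume) hb fun s hs ↦ hψ0 s hs.1]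
  set Φ := ∫ s in Ici t₀, φ s
  have hB : 0 ≤ y t₀ + 2 * Φ := hy0 t₀ le_rfl |>.trans (hbdd t₀ le_rfl)
  refine integrableOn_Ici_of_intervalIntegral_le hψ hψ0 (C := y t₀ ^ 2 + 2 * (Φ * (y t₀ + 2 * Φ)))
    fun b hb ↦ ?_
  have := intervalIntegral_mul_le_setIntegral_mul hb hφ hφ0 (hy.mono Icc_subset_Ici_self)
    (fun t ht ↦ hbdd t ht.1) hB
  nlinarith [h b hb, sq_nonneg (y b)]

theorem intervalIntegral_mul_add_le {θ g φ : ℝ → ℝ} {x s ε : ℝ} (hε : 0 < ε) (hxs : x ≤ s)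
    (hθ : ∀ r ∈ Ioo x s, 0 ≤ θ r) (hg : ∀ r ∈ Ioo x s, ε / 2 ≤ g r)
    (hθg : IntervalIntegrable (fun r ↦ θ r * g r) volume x s)
    (hθg2 : IntervalIntegrable (fun r ↦ θ r * g r ^ 2) volume x s)
    (hφ : IntervalIntegrable φ volume x s) :
    ∫ r in x..s, (θ r * g r + φ r) ≤ 2 / ε * (∫ r in x..s, θ r * g r ^ 2) + ∫ r in x..s, φ r := by
  rw [← intervalIntegral.integral_const_mul, ← intervalIntegral.integral_add (hθg2.const_mul _) hφ]
  refine intervalIntegral.integral_mono_on_of_le_Ioo hxs (hθg.add hφ) ((hθg2.const_mul _).add hφ)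
    fun r hr ↦ ?_
  have h1 : 1 ≤ 2 / ε * g r := by
    rw [div_mul_eq_mul_div, le_div_iff₀ hε]; linarith [hg r hr]
  have h2 : 0 ≤ θ r * g r := mul_nonneg (hθ r hr) (by linarith [hg r hr])
  nlinarith

theorem tendsto_norm_comp_atTop_zero {E F : Type*} [NormedAddCommGroup E] [NormedAddCommGroup F]
    {P : E → F} {u : ℝ → E} {θ φ : ℝ → ℝ} {t₀ c : ℝ} (hP : UniformContinuous P)
    (hu : ContinuousOn u (Ici t₀)) (hc : 0 < c) (hcθ : ∀ t, t₀ ≤ t → c ≤ θ t)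
    (hθP : ∀ a b, t₀ ≤ a → a ≤ b → IntervalIntegrable (fun s ↦ θ s * ‖P (u s)‖) volume a b)
    (hψ : IntegrableOn (fun s ↦ θ s * ‖P (u s)‖ ^ 2) (Ici t₀))
    (hφ : IntegrableOn φ (Ici t₀)) (hφ0 : ∀ t, t₀ ≤ t → 0 ≤ φ t)
    (hdisp : ∀ a b, t₀ ≤ a → a ≤ b → ‖u b - u a‖ ≤ ∫ s in a..b, (θ s * ‖P (u s)‖ + φ s)) :
    Tendsto (fun t ↦ ‖P (u t)‖) atTop (𝓝 0) := by
  have hθ0 : ∀ t, t₀ ≤ t → 0 ≤ θ t := fun t ht ↦ hc.le.trans (hcθ t ht)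
  have hψ0 : ∀ t, t₀ ≤ t → 0 ≤ θ t * ‖P (u t)‖ ^ 2 :=
    fun t ht ↦ mul_nonneg (hθ0 t ht) (sq_nonneg _)
  refine Metric.tendsto_nhds.mpr fun ε hε ↦ ?_
  obtain ⟨η, hη, hPη⟩ := Metric.uniformContinuous_iff.mp hP (ε / 2) (half_pos hε)
  filter_upwards [eventually_ge_atTop t₀,
    eventually_forall_intervalIntegral_lt hψ hψ0 (by positivity : 0 < ε * η / 4),
    eventually_forall_intervalIntegral_lt hφ hφ0 (half_pos hη)] with x hx hψx hφx
  rw [Real.dist_eq, sub_zero, abs_of_nonneg (norm_nonneg _)]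
  by_contra! hεx
  have hIx : ∀ s, x ≤ s → uIcc x s ⊆ Ici t₀ := fun s hs ↦
    uIcc_of_le hs ▸ Icc_subset_Ici_self.trans (Ici_subset_Ici.mpr hx)
  have hgood : ∀ s, ‖u s - u x‖ < η → ε / 2 ≤ ‖P (u s)‖ := fun s hs ↦ by
    have h := hPη (a := u x) (b := u s) (by rwa [dist_comm, dist_eq_norm])
    rw [dist_eq_norm] at h
    linarith [norm_sub_norm_le (P (u x)) (P (u s))]
  have htrap : ∀ s, x ≤ s → ‖u s - u x‖ < η := by
    refine forall_lt_of_forall_Ico_lt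
      ((hu.mono (Ici_subset_Ici.mpr hx)).sub continuousOn_const).norm fun s hs hlt ↦ ?_
    calc ‖u s - u x‖ ≤ ∫ r in x..s, (θ r * ‖P (u r)‖ + φ r) := hdisp x s hx hs
      _ ≤ 2 / ε * (∫ r in x..s, θ r * ‖P (u r)‖ ^ 2) + ∫ r in x..s, φ r :=
        intervalIntegral_mul_add_le hε hs (fun r hr ↦ hθ0 r (hx.trans hr.1.le))
          (fun r hr ↦ hgood r (hlt r ⟨hr.1.le, hr.2⟩)) (hθP x s hx hs)
          (hψ.mono_set (hIx s hs)).intervalIntegrable (hφ.mono_set (hIx s hs)).intervalIntegrable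
      _ < 2 / ε * (ε * η / 4) + η / 2 := by gcongr; exacts [hψx s hs, hφx s hs]
      _ = η := by field_simp; ring
  have hconst : IntegrableOn (fun _ ↦ c * (ε / 2) ^ 2) (Ici x) := by
    refine Integrable.mono' (hψ.mono_set (Ici_subset_Ici.mpr hx)) aestronglyMeasurable_const
      ((ae_restrict_iff' measurableSet_Ici).mpr (.of_forall fun s hs ↦ ?_))
    rw [Real.norm_of_nonneg (by positivity)]
    exact mul_le_mul (hcθ s (hx.trans hs)) (pow_le_pow_left₀ (by positivity)
      (hgood s (htrap s hs)) 2) (by positivity) (hθ0 s (hx.trans hs))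
  rw [integrableOn_const_iff] at hconst
  simp [hc.ne', hε.ne'] at hconst

section EvolutionEquation

variable {H : Type*} [NormedAddCommGroup H] [InnerProductSpace ℝ H] {T : H → H} {θ : ℝ → ℝ}
  {f u : ℝ → H} {t₀ : ℝ} {u₀ : H}

theorem norm_sub_sq_add_integral_le [CompleteSpace H] {p : H} {b : ℝ}
    (hT : ∀ y, ‖T y - p‖ ≤ ‖y - p‖) (hθ : ∀ t, t₀ ≤ t → 0 ≤ θ t) (hb : t₀ ≤ b)
    (hG : IntervalIntegrable (fun s ↦ θ s • (T (u s) - u s) + f s) volume t₀ b)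
    (hu : ∀ t, t₀ ≤ t → u t = u₀ + ∫ s in t₀..t, (θ s • (T (u s) - u s) + f s))
    (hψ : IntervalIntegrable (fun s ↦ θ s * ‖T (u s) - u s‖ ^ 2) volume t₀ b)
    (hφ : IntervalIntegrable (fun s ↦ ‖f s‖ * ‖u s - p‖) volume t₀ b) :
    ‖u b - p‖ ^ 2 + ∫ s in t₀..b, θ s * ‖T (u s) - u s‖ ^ 2
      ≤ ‖u t₀ - p‖ ^ 2 + 2 * ∫ s in t₀..b, ‖f s‖ * ‖u s - p‖ := by
  have hv : ∀ x ∈ Icc t₀ b, u x - p = u t₀ - p + ∫ s in t₀..x, (θ s • (T (u s) - u s) + f s) :=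
    fun x hx ↦ by rw [hu x hx.1, hu t₀ le_rfl, intervalIntegral.integral_same, add_zero]; abel
  have hmono := intervalIntegral.integral_mono_on hb
    (intervalIntegrable_two_inner_of_eq_add_integral hb hG hv) ((hφ.const_mul 2).sub hψ)
    fun s hs ↦ two_inner_sub_smul_add_le (hθ s hs.1) (hT (u s))
  rw [integral_two_inner_eq_of_eq_add_integral hb hG hv,
    intervalIntegral.integral_sub (hφ.const_mul 2) hψ, intervalIntegral.integral_const_mul] at hmono
  linarith

theorem norm_sub_le_integral (hθ : ∀ t, t₀ ≤ t → 0 ≤ θ t)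
    (hG : ∀ t, t₀ ≤ t → IntervalIntegrable (fun s ↦ θ s • (T (u s) - u s) + f s) volume t₀ t)
    (hu : ∀ t, t₀ ≤ t → u t = u₀ + ∫ s in t₀..t, (θ s • (T (u s) - u s) + f s))
    (hθg : ∀ a b, t₀ ≤ a → a ≤ b →
      IntervalIntegrable (fun s ↦ θ s * ‖T (u s) - u s‖) volume a b)
    (hf : IntegrableOn (fun s ↦ ‖f s‖) (Ici t₀)) (a b : ℝ) (ha : t₀ ≤ a) (hab : a ≤ b) :
    ‖u b - u a‖ ≤ ∫ s in a..b, (θ s * ‖T (u s) - u s‖ + ‖f s‖) := by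
  have hGab := (hG b (ha.trans hab)).mono_set
    (uIcc_subset_uIcc (mem_uIcc_of_le ha hab) right_mem_uIcc)
  have hfab : IntervalIntegrable (fun s ↦ ‖f s‖) volume a b :=
    (hf.mono_set (uIcc_of_le hab ▸ Icc_subset_Ici_self.trans (Ici_subset_Ici.mpr ha)))
      |>.intervalIntegrable
  rw [hu b (ha.trans hab), hu a ha, add_sub_add_left_eq_sub,
    intervalIntegral.integral_interval_sub_left (hG b (ha.trans hab)) (hG a ha)]
  refine (intervalIntegral.norm_integral_le_integral_norm hab).trans
    (intervalIntegral.integral_mono_on hab hGab.norm ((hθg a b ha hab).add hfab) fun s hs ↦ ?_)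
  calc ‖θ s • (T (u s) - u s) + f s‖ ≤ ‖θ s • (T (u s) - u s)‖ + ‖f s‖ := norm_add_le _ _
    _ = θ s * ‖T (u s) - u s‖ + ‖f s‖ := by
      rw [norm_smul, Real.norm_of_nonneg (hθ s (ha.trans hs.1))]

end EvolutionEquation

theorem stmt_2_general
    {H : Type*} [NormedAddCommGroup H] [InnerProductSpace ℝ H] [CompleteSpace H]
    (T : H → H)
    (hT : ∀ (y x : H), T x = x → ‖T y - x‖ ≤ ‖y - x‖)
    (hfix : ∃ x : H, T x = x)
    (hTuc : UniformContinuous T)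
    (t₀ : ℝ)
    (θ : ℝ → ℝ)
    (hθint : ∀ b : ℝ, IntervalIntegrable θ volume t₀ b)
    (c : ℝ) (hc : 0 < c) (hcθ : ∀ t, t₀ ≤ t → c ≤ θ t)
    (f : ℝ → H)
    (hfint : IntegrableOn (fun s => ‖f s‖) (Set.Ici t₀))
    (u : ℝ → H) (u₀ : H)
    (huint : ∀ t, t₀ ≤ t →
      IntervalIntegrable (fun s => θ s • (T (u s) - u s) + f s) volume t₀ t)
    (husol : ∀ t, t₀ ≤ t →
      u t = u₀ + ∫ s in t₀..t, (θ s • (T (u s) - u s) + f s)) :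
    Tendsto (fun t => ‖T (u t) - u t‖) atTop (nhds 0) := by
  obtain ⟨p, hp⟩ := hfix
  have hθ₀ : ∀ t, t₀ ≤ t → 0 ≤ θ t := fun t ht ↦ hc.le.trans (hcθ t ht)
  have hu : ContinuousOn u (Ici t₀) := continuousOn_Ici_of_eq_add_integral huint husol
  have hup : ContinuousOn (fun t ↦ ‖u t - p‖) (Ici t₀) := (hu.sub continuousOn_const).norm
  have hg : ContinuousOn (fun t ↦ ‖T (u t) - u t‖) (Ici t₀) :=
    ((hTuc.continuous.comp_continuousOn hu).sub hu).norm
  have hψ : ∀ b, t₀ ≤ b →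
      IntervalIntegrable (fun s ↦ θ s * ‖T (u s) - u s‖ ^ 2) volume t₀ b :=
    fun b ↦ intervalIntegrable_mul_of_continuousOn_Ici hθint (hg.pow 2) t₀ b le_rfl
  have hφ : ∀ b, t₀ ≤ b → IntervalIntegrable (fun s ↦ ‖f s‖ * ‖u s - p‖) volume t₀ b :=
    fun b hb ↦ (hfint.mono_set (uIcc_of_le hb ▸ Icc_subset_Ici_self)).intervalIntegrable
      |>.mul_continuousOn (hup.mono (uIcc_of_le hb ▸ Icc_subset_Ici_self))
  have hdissipation : IntegrableOn (fun s ↦ θ s * ‖T (u s) - u s‖ ^ 2) (Ici t₀) :=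
    integrableOn_Ici_of_sq_add_integral_le hup (fun _ _ ↦ norm_nonneg _) hfint
      (fun _ _ ↦ norm_nonneg _) hψ (fun t ht ↦ mul_nonneg (hθ₀ t ht) (sq_nonneg _))
      fun b hb ↦ norm_sub_sq_add_integral_le (hT · p hp) hθ₀ hb (huint b hb) husol (hψ b hb)
        (hφ b hb)
  have hθg : ∀ a b, t₀ ≤ a → a ≤ b →
      IntervalIntegrable (fun s ↦ θ s * ‖T (u s) - u s‖) volume a b :=
    intervalIntegrable_mul_of_continuousOn_Ici hθint hg
  exact tendsto_norm_comp_atTop_zero (P := fun y ↦ T y - y) (hTuc.sub uniformContinuous_id) hu hc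
    hcθ hθg hdissipation hfint (fun _ _ ↦ norm_nonneg _)
    (norm_sub_le_integral hθ₀ huint husol hθg hfint)

theorem stmt_2
    {H : Type*} [NormedAddCommGroup H] [InnerProductSpace ℝ H] [CompleteSpace H]
    (T : H → H)
    (hT : ∀ (y x : H), T x = x → ‖T y - x‖ ≤ ‖y - x‖)
    (hfix : ∃ x : H, T x = x)
    (hTuc : UniformContinuous T)
    (t₀ : ℝ) (ht₀ : 0 < t₀)
    (θ : ℝ → ℝ) (hθ : ∀ t, t₀ ≤ t → 0 ≤ θ t)
    (hθint : ∀ b : ℝ, IntervalIntegrable θ volume t₀ b)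
    (c : ℝ) (hc : 0 < c) (hcθ : ∀ t, t₀ ≤ t → c ≤ θ t)
    (f : ℝ → H)
    (hfint : IntegrableOn (fun s => ‖f s‖) (Set.Ici t₀))
    (u : ℝ → H) (u₀ : H)
    (huint : ∀ t, t₀ ≤ t →
      IntervalIntegrable (fun s => θ s • (T (u s) - u s) + f s) volume t₀ t)
    (husol : ∀ t, t₀ ≤ t →
      u t = u₀ + ∫ s in t₀..t, (θ s • (T (u s) - u s) + f s)) :
    Tendsto (fun t => ‖T (u t) - u t‖) atTop (nhds 0) :=
  stmt_2_general T hT hfix hTuc t₀ θ hθint c hc hcθ f hfint u u₀ huint husol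
end

section
/- Let T, T₁, T₂ : H → H be operators with Fix(T) ≠ ∅ and I − T = μ(T₁ − T₂) for some μ ≠ 0. Suppose there exist ω₀, ω₁, ω₂ ∈ ℝ such that for all x ∈ H and all x* ∈ Fix(T): ‖T(x) − x*‖² ≤ ‖x − x*‖² − ω₀‖x − T(x)‖² − ω₁‖T₁(x) − T₁(x*)‖² − ω₂‖T₂(x) − T₂(x*)‖², where either (ω₁ = ω₂ = 0 and ω₀ > 0) or (ω₁ + ω₂ > 0 and ω₀ + ω₁ω₂/(μ²(ω₁ + ω₂)) > 0). Then T is quasi-nonexpansive. -/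
open MeasureTheory Filter Set
open scoped RealInnerProductSpace

/-!
Write `u = T₁ y - T₁ x*` and `v = T₂ y - T₂ x*`. At a fixed point `T₁ x* = T₂ x*`, so
`y - T y = μ • (u - v)`, and the claim reduces to the nonnegativity of the deficit
`ω₀ μ² ‖u - v‖² + ω₁ ‖u‖² + ω₂ ‖v‖²`. When `ω₁ + ω₂ > 0` this follows from the identity
`(ω₁ + ω₂)(ω₁ ‖u‖² + ω₂ ‖v‖²) = ‖ω₁ u + ω₂ v‖² + ω₁ ω₂ ‖u - v‖²`, which bounds the deficit below by
`(ω₀ + ω₁ ω₂ / (μ² (ω₁ + ω₂))) μ² ‖u - v‖²`.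
-/

section WeightedNorm

variable {H : Type*} [NormedAddCommGroup H] [InnerProductSpace ℝ H]

theorem add_mul_weighted_norm_sq (a b : ℝ) (u v : H) :
    (a + b) * (a * ‖u‖ ^ 2 + b * ‖v‖ ^ 2) = ‖a • u + b • v‖ ^ 2 + a * b * ‖u - v‖ ^ 2 := by
  rw [norm_add_sq_real, norm_sub_sq_real, norm_smul, norm_smul, real_inner_smul_left,
    real_inner_smul_right, Real.norm_eq_abs, Real.norm_eq_abs, mul_pow, mul_pow, sq_abs, sq_abs]
  ring

theorem mul_div_add_mul_norm_sub_sq_le {a b : ℝ} (hab : 0 < a + b) (u v : H) :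
    a * b / (a + b) * ‖u - v‖ ^ 2 ≤ a * ‖u‖ ^ 2 + b * ‖v‖ ^ 2 := by
  rw [div_mul_eq_mul_div, div_le_iff₀' hab, add_mul_weighted_norm_sq]
  exact le_add_of_nonneg_left (sq_nonneg _)

theorem deficit_nonneg {μ ω₀ ω₁ ω₂ : ℝ} (hμ : μ ≠ 0)
    (hω : (ω₁ = 0 ∧ ω₂ = 0 ∧ 0 < ω₀) ∨
          (0 < ω₁ + ω₂ ∧ 0 < ω₀ + ω₁ * ω₂ / (μ ^ 2 * (ω₁ + ω₂))))
    (u v : H) :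
    0 ≤ ω₀ * ‖μ • (u - v)‖ ^ 2 + ω₁ * ‖u‖ ^ 2 + ω₂ * ‖v‖ ^ 2 := by
  rcases hω with ⟨rfl, rfl, hω₀⟩ | ⟨hsum, hpos⟩
  · simp only [zero_mul, add_zero]
    positivity
  · have hμ2 : 0 < μ ^ 2 := by positivity
    have hweighted := mul_div_add_mul_norm_sub_sq_le hsum u v
    calc (0 : ℝ)
        ≤ (ω₀ + ω₁ * ω₂ / (μ ^ 2 * (ω₁ + ω₂))) * (μ ^ 2 * ‖u - v‖ ^ 2) := by positivity
      _ = ω₀ * ‖μ • (u - v)‖ ^ 2 + ω₁ * ω₂ / (ω₁ + ω₂) * ‖u - v‖ ^ 2 := by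
          rw [norm_smul, Real.norm_eq_abs, mul_pow, sq_abs]
          field_simp
      _ ≤ ω₀ * ‖μ • (u - v)‖ ^ 2 + ω₁ * ‖u‖ ^ 2 + ω₂ * ‖v‖ ^ 2 := by linarith

end WeightedNorm

theorem stmt_4_general
    {H : Type*} [NormedAddCommGroup H] [InnerProductSpace ℝ H]
    (T T₁ T₂ : H → H) (μ : ℝ) (hμ : μ ≠ 0)
    (hdecomp : ∀ x : H, x - T x = μ • (T₁ x - T₂ x))
    (ω₀ ω₁ ω₂ : ℝ)
    (hω : (ω₁ = 0 ∧ ω₂ = 0 ∧ 0 < ω₀) ∨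
          (0 < ω₁ + ω₂ ∧ 0 < ω₀ + ω₁ * ω₂ / (μ ^ 2 * (ω₁ + ω₂))))
    (hineq : ∀ (x xs : H), T xs = xs →
      ‖T x - xs‖ ^ 2 ≤ ‖x - xs‖ ^ 2 - ω₀ * ‖x - T x‖ ^ 2
        - ω₁ * ‖T₁ x - T₁ xs‖ ^ 2 - ω₂ * ‖T₂ x - T₂ xs‖ ^ 2) :
    ∀ (y x : H), T x = x → ‖T y - x‖ ≤ ‖y - x‖ := by
  intro y x hx
  have hT₁₂ : T₁ x = T₂ x := by
    have h := hdecomp x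
    rw [hx, sub_self, eq_comm, smul_eq_zero, sub_eq_zero] at h
    exact h.resolve_left hμ
  have hstep : y - T y = μ • ((T₁ y - T₁ x) - (T₂ y - T₂ x)) := by
    rw [hdecomp y, hT₁₂, sub_sub_sub_cancel_right]
  have hdeficit := deficit_nonneg hμ hω (T₁ y - T₁ x) (T₂ y - T₂ x)
  rw [← hstep] at hdeficit
  have hsq : ‖T y - x‖ ^ 2 ≤ ‖y - x‖ ^ 2 := by linarith [hineq y x hx]
  exact (pow_le_pow_iff_left₀ (norm_nonneg _) (norm_nonneg _) two_ne_zero).mp hsq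

theorem stmt_4
    {H : Type*} [NormedAddCommGroup H] [InnerProductSpace ℝ H] [CompleteSpace H]
    (T T₁ T₂ : H → H) (μ : ℝ) (hμ : μ ≠ 0)
    (hdecomp : ∀ x : H, x - T x = μ • (T₁ x - T₂ x))
    (hfix : ∃ x : H, T x = x)
    (ω₀ ω₁ ω₂ : ℝ)
    (hω : (ω₁ = 0 ∧ ω₂ = 0 ∧ 0 < ω₀) ∨
          (0 < ω₁ + ω₂ ∧ 0 < ω₀ + ω₁ * ω₂ / (μ ^ 2 * (ω₁ + ω₂))))
    (hineq : ∀ (x xs : H), T xs = xs →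
      ‖T x - xs‖ ^ 2 ≤ ‖x - xs‖ ^ 2 - ω₀ * ‖x - T x‖ ^ 2
        - ω₁ * ‖T₁ x - T₁ xs‖ ^ 2 - ω₂ * ‖T₂ x - T₂ xs‖ ^ 2) :
    ∀ (y x : H), T x = x → ‖T y - x‖ ≤ ‖y - x‖ :=
  stmt_4_general T T₁ T₂ μ hμ hdecomp ω₀ ω₁ ω₂ hω hineq
end

section
/- Let T : H → H be a quasi-nonexpansive operator with Fix(T) ≠ ∅ satisfying the demiclosedness principle, let u be a strong global solution of u'(t) = θ(t)(T(u(t)) − u(t)), u(t₀) = u₀ (i.e., with perturbation f ≡ 0), and let û ∈ Fix(T) be such that u(t) converges weakly to û. Suppose I − T is metrically subregular at û for 0 with radius r and modulus κ > 0, and that r > lim_{t→∞} ‖u(t) − û‖. Then there exists t' ≥ t₀ such that for all t ≥ t': dist(u(t), Fix(T)) ≤ ‖u(t') − û‖ · e^{−(1/(2κ²))∫_{t'}^{t} θ(s) ds}. -/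
open MeasureTheory Filter Set
open scoped RealInnerProductSpace

/-!
For a fixed point `p`, the curve `u` is absolutely continuous and
`‖u t₂ - p‖² = ‖u t₁ - p‖² + 2 ∫ θ ⟪T u - u, u - p⟫` (Fubini on a triangle);
quasi-nonexpansiveness bounds the integrand by `-θ ‖T u - u‖² / 2`. Hence `d t = dist (u t, Fix T)`
is nonincreasing, and once `u` stays in the subregularity ball, `‖T u - u‖ ≥ d / κ` yields
`d t₂² (1 + Θ / κ²) ≤ d t₁²` with `Θ = ∫_{t₁}^{t₂} θ`. Cutting `[t', t]` into `n` pieces of equal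
`θ`-mass gives `d t² (1 + Θ / (n κ²))ⁿ ≤ d t'²`, and `n → ∞` gives the exponential rate.
-/

section Integrals

variable {H : Type*} [NormedAddCommGroup H] [InnerProductSpace ℝ H]

theorem MeasureTheory.IntegrableOn.inner_continuousOn {f g : ℝ → H} {a b : ℝ}
    (hf : IntegrableOn f (Ioc a b)) (hg : ContinuousOn g (Icc a b)) :
    IntegrableOn (fun s => ⟪f s, g s⟫) (Ioc a b) := by
  obtain ⟨C, hC⟩ := isCompact_Icc.exists_bound_of_continuousOn hg
  refine Integrable.mono' (hf.norm.mul_const C)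
    (hf.aestronglyMeasurable.inner
      ((hg.mono Ioc_subset_Icc_self).aestronglyMeasurable measurableSet_Ioc)) ?_
  filter_upwards [ae_restrict_mem measurableSet_Ioc] with s hs
  exact (norm_inner_le_norm _ _).trans
    (mul_le_mul_of_nonneg_left (hC s (Ioc_subset_Icc_self hs)) (norm_nonneg _))

theorem continuousOn_of_eq_add_integral {v f : ℝ → H} {a b : ℝ} (hab : a ≤ b)
    (hf : IntervalIntegrable f volume a b) (hv : ∀ t ∈ Icc a b, v t = v a + ∫ s in a..t, f s) :
    ContinuousOn v (Icc a b) := by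
  have h := intervalIntegral.continuousOn_primitive_interval' hf left_mem_uIcc
  rw [uIcc_of_le hab] at h
  exact ((continuousOn_const (c := v a)).add h).congr hv

variable [CompleteSpace H]

theorem integral_inner_integral_Ioc_swap {f : ℝ → H} {a b : ℝ}
    (hf : IntegrableOn f (Ioc a b)) :
    ∫ s in Ioc a b, ⟪f s, ∫ r in Ioc s b, f r⟫ = ∫ r in Ioc a b, ⟪f r, ∫ s in Ioc a r, f s⟫ := by
  set μ := volume.restrict (Ioc a b)
  set G : ℝ × ℝ → ℝ := {p | p.1 < p.2}.indicator fun p => ⟪f p.1, f p.2⟫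
  have hG : Integrable G (μ.prod μ) := by
    refine Integrable.mono' (hf.norm.mul_prod hf.norm)
      ((hf.aestronglyMeasurable.comp_fst.inner hf.aestronglyMeasurable.comp_snd).indicator
        (measurableSet_lt measurable_fst measurable_snd)) (ae_of_all _ fun p => ?_)
    rw [norm_indicator_eq_indicator_norm]
    exact indicator_le_self' (fun _ _ => by positivity) p |>.trans (norm_inner_le_norm _ _)
  have h_left : ∀ s ∈ Ioc a b, ∫ r, G (s, r) ∂μ = ⟪f s, ∫ r in Ioc s b, f r⟫ := by
    intro s hs
    have : Ioi s ∩ Ioc a b = Ioc s b := by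
      ext r; simp only [mem_inter_iff, mem_Ioi, mem_Ioc]; grind
    rw [show (fun r => G (s, r)) = (Ioi s).indicator fun r => ⟪f s, f r⟫ from rfl,
      integral_indicator measurableSet_Ioi, Measure.restrict_restrict measurableSet_Ioi, this,
      integral_inner (hf.mono_set (Ioc_subset_Ioc_left hs.1.le))]
  have h_right : ∀ r ∈ Ioc a b, ∫ s, G (s, r) ∂μ = ⟪f r, ∫ s in Ioc a r, f s⟫ := by
    intro r hr
    have : Iio r ∩ Ioc a b = Ioo a r := by
      ext s; simp only [mem_inter_iff, mem_Iio, mem_Ioc, mem_Ioo]; grind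
    rw [show (fun s => G (s, r)) = (Iio r).indicator fun s => ⟪f s, f r⟫ from rfl,
      integral_indicator measurableSet_Iio, Measure.restrict_restrict measurableSet_Iio, this,
      ← integral_Ioc_eq_integral_Ioo, ← integral_inner (hf.mono_set (Ioc_subset_Ioc_right hr.2))]
    simp_rw [real_inner_comm]
  calc ∫ s in Ioc a b, ⟪f s, ∫ r in Ioc s b, f r⟫ = ∫ s, ∫ r, G (s, r) ∂μ ∂μ :=
        setIntegral_congr_fun measurableSet_Ioc fun s hs => (h_left s hs).symm
    _ = ∫ r, ∫ s, G (s, r) ∂μ ∂μ := integral_integral_swap hG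
    _ = ∫ r in Ioc a b, ⟪f r, ∫ s in Ioc a r, f s⟫ :=
        setIntegral_congr_fun measurableSet_Ioc h_right

theorem norm_sub_sq_eq_of_eq_add_integral {v f : ℝ → H} {a b : ℝ} (hab : a ≤ b)
    (hf : IntervalIntegrable f volume a b) (hv : ∀ t ∈ Icc a b, v t = v a + ∫ s in a..t, f s)
    (p : H) :
    ‖v b - p‖ ^ 2 = ‖v a - p‖ ^ 2 + 2 * ∫ s in a..b, ⟪f s, v s - p⟫ := by
  have hfI : IntegrableOn f (Ioc a b) := (intervalIntegrable_iff_integrableOn_Ioc_of_le hab).1 hf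
  have h_incr : ∀ s ∈ Icc a b, ∀ t ∈ Icc a b, s ≤ t → v t - v s = ∫ r in Ioc s t, f r := by
    intro s hs t ht hst
    rw [hv t ht, hv s hs, ← intervalIntegral.integral_of_le hst,
      ← intervalIntegral.integral_interval_sub_left
        (hf.mono_set (uIcc_subset_uIcc_left (Icc_subset_uIcc ht)))
        (hf.mono_set (uIcc_subset_uIcc_left (Icc_subset_uIcc hs)))]
    abel
  have hv_cont := continuousOn_of_eq_add_integral hab hf hv
  have h_int : ∀ g : ℝ → H, ContinuousOn g (Icc a b) →
      IntegrableOn (fun s => ⟪f s, g s⟫) (Ioc a b) := fun g hg => hfI.inner_continuousOn hg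
  have ha : a ∈ Icc a b := left_mem_Icc.2 hab
  have hb : b ∈ Icc a b := right_mem_Icc.2 hab
  have h_swap : ∫ s in Ioc a b, ⟪f s, v b - v s⟫ = ∫ s in Ioc a b, ⟪f s, v s - v a⟫ := by
    convert integral_inner_integral_Ioc_swap hfI using 1 <;>
      refine setIntegral_congr_fun measurableSet_Ioc fun s hs => ?_
    · rw [h_incr s (Ioc_subset_Icc_self hs) b hb hs.2]
    · rw [h_incr a ha s (Ioc_subset_Icc_self hs) hs.1.le]
  have h_sq : ‖v b - v a‖ ^ 2 = 2 * ∫ s in Ioc a b, ⟪f s, v s - v a⟫ := by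
    calc ‖v b - v a‖ ^ 2 = ⟪v b - v a, ∫ s in Ioc a b, f s⟫ := by
          rw [← real_inner_self_eq_norm_sq]; nth_rw 2 [h_incr a ha b hb hab]
      _ = ∫ s in Ioc a b, ⟪f s, v b - v s⟫ + ⟪f s, v s - v a⟫ := by
          rw [← integral_inner hfI]
          simp_rw [← inner_add_right, sub_add_sub_cancel, real_inner_comm (f _)]
      _ = 2 * ∫ s in Ioc a b, ⟪f s, v s - v a⟫ := by
          rw [integral_add (h_int (fun s => v b - v s) (continuousOn_const.sub hv_cont))
            (h_int (fun s => v s - v a) (hv_cont.sub continuousOn_const)), h_swap]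
          ring
  have h_cross : ⟪v a - p, v b - v a⟫ = ∫ s in Ioc a b, ⟪f s, v a - p⟫ := by
    rw [h_incr a ha b hb hab, ← integral_inner hfI]
    simp_rw [real_inner_comm (f _)]
  calc ‖v b - p‖ ^ 2 = ‖(v a - p) + (v b - v a)‖ ^ 2 := by rw [sub_add_sub_cancel']
    _ = ‖v a - p‖ ^ 2 + 2 * ⟪v a - p, v b - v a⟫ + ‖v b - v a‖ ^ 2 := norm_add_sq_real _ _
    _ = ‖v a - p‖ ^ 2 + 2 * ∫ s in Ioc a b, ⟪f s, v a - p⟫ + ⟪f s, v s - v a⟫ := by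
        rw [h_sq, h_cross, integral_add (h_int _ continuousOn_const)
          (h_int (fun s => v s - v a) (hv_cont.sub continuousOn_const))]
        ring
    _ = ‖v a - p‖ ^ 2 + 2 * ∫ s in a..b, ⟪f s, v s - p⟫ := by
        simp_rw [← inner_add_right, sub_add_sub_cancel', intervalIntegral.integral_of_le hab]

end Integrals

theorem mul_exp_le_of_mul_one_add_le {g Φ : ℝ → ℝ} {a b : ℝ} (hab : a ≤ b)
    (hΦ : ContinuousOn Φ (Icc a b)) (hΦab : Φ a ≤ Φ b) (hg : ∀ t ∈ Icc a b, 0 ≤ g t)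
    (h : ∀ s ∈ Icc a b, ∀ t ∈ Icc s b, g t * (1 + (Φ t - Φ s)) ≤ g s) :
    g b * Real.exp (Φ b - Φ a) ≤ g a := by
  set Δ := Φ b - Φ a
  have h_pow : ∀ n : ℕ, 1 ≤ n → g b * (1 + Δ / n) ^ n ≤ g a := by
    intro n hn
    have hδ : 0 ≤ Δ / n := div_nonneg (sub_nonneg.2 hΦab) n.cast_nonneg
    -- Induction along a chain `a ≤ … ≤ y` from the intermediate value theorem,
    -- on whose links `Φ` increases by `Δ / n`.
    have h_steps : ∀ i ≤ n, ∀ y ∈ Icc a b, Φ a + i * (Δ / n) ≤ Φ y →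
        g y * (1 + Δ / n) ^ i ≤ g a := by
      intro i
      induction i with
      | zero =>
        intro _ y hy hΦy
        calc g y * (1 + Δ / n) ^ 0 ≤ g y * (1 + (Φ y - Φ a)) := by
              rw [Nat.cast_zero, zero_mul, add_zero] at hΦy
              rw [pow_zero]; exact mul_le_mul_of_nonneg_left (by linarith) (hg y hy)
          _ ≤ g a := h a (left_mem_Icc.2 hab) y hy
      | succ i ih =>
        intro hi y hy hΦy
        push_cast at hΦy
        obtain ⟨z, hz, hΦz⟩ : ∃ z ∈ Icc a y, Φ z = Φ a + i * (Δ / n) :=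
          intermediate_value_Icc hy.1 (hΦ.mono (Icc_subset_Icc_right hy.2))
            ⟨by nlinarith, by linarith⟩
        have hz' : z ∈ Icc a b := ⟨hz.1, hz.2.trans hy.2⟩
        calc g y * (1 + Δ / n) ^ (i + 1) = g y * (1 + Δ / n) * (1 + Δ / n) ^ i := by ring
          _ ≤ g y * (1 + (Φ y - Φ z)) * (1 + Δ / n) ^ i := by
              gcongr
              · exact hg y hy
              · linarith
          _ ≤ g z * (1 + Δ / n) ^ i := by gcongr; exact h z hz' y ⟨hz.2, hy.2⟩
          _ ≤ g a := ih (by omega) z hz' hΦz.ge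
    refine h_steps n le_rfl b (right_mem_Icc.2 hab) (le_of_eq ?_)
    field_simp
    ring
  exact le_of_tendsto ((Real.tendsto_one_add_div_pow_exp Δ).const_mul (g b))
    (eventually_atTop.2 ⟨1, h_pow⟩)

theorem Metric.le_infDist_sq {α : Type*} [PseudoMetricSpace α] {x : α} {s : Set α}
    (hs : s.Nonempty) {r : ℝ} (hr : 0 ≤ r) (h : ∀ p ∈ s, r ≤ dist x p ^ 2) :
    r ≤ Metric.infDist x s ^ 2 := by
  have : √r ≤ Metric.infDist x s :=
    (Metric.le_infDist hs).2 fun p hp => Real.sqrt_le_iff.2 ⟨dist_nonneg, h p hp⟩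
  simpa [Real.sq_sqrt hr] using pow_le_pow_left₀ (Real.sqrt_nonneg r) this 2

theorem Metric.infDist_le_infDist_of_forall_dist_le {α : Type*} [PseudoMetricSpace α] {x y : α}
    {s : Set α} (h : ∀ p ∈ s, dist x p ≤ dist y p) : Metric.infDist x s ≤ Metric.infDist y s := by
  simp only [Metric.infDist_eq_iInf]
  exact ciInf_mono ⟨0, by rintro _ ⟨p, rfl⟩; exact dist_nonneg⟩ fun p => h p p.2

section Dynamics

variable {H : Type*} [NormedAddCommGroup H] [InnerProductSpace ℝ H]

def IsQuasiNonexpansive (T : H → H) : Prop :=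
  ∀ y x, T x = x → ‖T y - x‖ ≤ ‖y - x‖

theorem IsQuasiNonexpansive.inner_sub_le {T : H → H} (hT : IsQuasiNonexpansive T) {p : H}
    (hp : T p = p) (y : H) : ⟪T y - y, y - p⟫ ≤ -(1 / 2) * ‖T y - y‖ ^ 2 := by
  have h := pow_le_pow_left₀ (norm_nonneg _) (hT y p hp) 2
  rw [← sub_add_sub_cancel (T y) y p, norm_add_sq_real] at h
  linarith

def IsStrongGlobalSolution (T : H → H) (θ : ℝ → ℝ) (t₀ : ℝ) (u₀ : H) (u : ℝ → H) : Prop :=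
  ∀ t, t₀ ≤ t → IntervalIntegrable (fun s => θ s • (T (u s) - u s)) volume t₀ t ∧
    u t = u₀ + ∫ s in t₀..t, θ s • (T (u s) - u s)

namespace IsStrongGlobalSolution

variable {T : H → H} {θ : ℝ → ℝ} {t₀ t₁ t₂ : ℝ} {u₀ : H} {u : ℝ → H}

theorem intervalIntegrable (hu : IsStrongGlobalSolution T θ t₀ u₀ u) (h₁ : t₀ ≤ t₁)
    (h₂ : t₀ ≤ t₂) : IntervalIntegrable (fun s => θ s • (T (u s) - u s)) volume t₁ t₂ :=
  (hu t₁ h₁).1.symm.trans (hu t₂ h₂).1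

theorem eq_add_integral (hu : IsStrongGlobalSolution T θ t₀ u₀ u) (h₁ : t₀ ≤ t₁) {t : ℝ}
    (ht : t₀ ≤ t) : u t = u t₁ + ∫ s in t₁..t, θ s • (T (u s) - u s) := by
  rw [(hu t ht).2, (hu t₁ h₁).2, add_assoc,
    intervalIntegral.integral_add_adjacent_intervals (hu t₁ h₁).1 (hu.intervalIntegrable h₁ ht)]

theorem norm_sub_sq_add_mul_integral_le [CompleteSpace H]
    (hu : IsStrongGlobalSolution T θ t₀ u₀ u) (hT : IsQuasiNonexpansive T)
    (hθ : ∀ t, t₀ ≤ t → 0 ≤ θ t) (hθ_int : IntervalIntegrable θ volume t₁ t₂)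
    (h₁ : t₀ ≤ t₁) (h₁₂ : t₁ ≤ t₂) {p : H} (hp : T p = p) {m : ℝ}
    (hm : ∀ s ∈ Icc t₁ t₂, m ≤ ‖T (u s) - u s‖ ^ 2) :
    ‖u t₂ - p‖ ^ 2 + m * ∫ s in t₁..t₂, θ s ≤ ‖u t₁ - p‖ ^ 2 := by
  have hF := hu.intervalIntegrable h₁ (h₁.trans h₁₂)
  have hv : ∀ t ∈ Icc t₁ t₂, u t = u t₁ + ∫ s in t₁..t, θ s • (T (u s) - u s) :=
    fun t ht => hu.eq_add_integral h₁ (h₁.trans ht.1)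
  have h_int : IntervalIntegrable (fun s => ⟪θ s • (T (u s) - u s), u s - p⟫) volume t₁ t₂ := by
    have hu_cont := continuousOn_of_eq_add_integral h₁₂ hF hv
    rw [intervalIntegrable_iff_integrableOn_Ioc_of_le h₁₂] at hF ⊢
    exact hF.inner_continuousOn (hu_cont.sub continuousOn_const)
  have h_le : ∫ s in t₁..t₂, ⟪θ s • (T (u s) - u s), u s - p⟫ ≤
      ∫ s in t₁..t₂, -(m / 2) * θ s := by
    refine intervalIntegral.integral_mono_on h₁₂ h_int (hθ_int.const_mul _) fun s hs => ?_
    have hθs := hθ s (h₁.trans hs.1)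
    rw [real_inner_smul_left]
    nlinarith [hT.inner_sub_le hp (u s), hm s hs]
  rw [norm_sub_sq_eq_of_eq_add_integral h₁₂ hF hv p]
  rw [intervalIntegral.integral_const_mul] at h_le
  linarith

theorem infDist_le_infDist_of_le [CompleteSpace H] (hu : IsStrongGlobalSolution T θ t₀ u₀ u)
    (hT : IsQuasiNonexpansive T) (hθ : ∀ t, t₀ ≤ t → 0 ≤ θ t)
    (hθ_int : IntervalIntegrable θ volume t₁ t₂) (h₁ : t₀ ≤ t₁) (h₁₂ : t₁ ≤ t₂) :
    Metric.infDist (u t₂) {x | T x = x} ≤ Metric.infDist (u t₁) {x | T x = x} := by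
  refine Metric.infDist_le_infDist_of_forall_dist_le fun p hp => ?_
  have h := hu.norm_sub_sq_add_mul_integral_le hT hθ hθ_int h₁ h₁₂ hp (m := 0)
    fun s _ => sq_nonneg _
  rw [zero_mul, add_zero] at h
  simpa only [dist_eq_norm] using pow_le_pow_iff_left₀ (norm_nonneg _) (norm_nonneg _)
    two_ne_zero |>.1 h

theorem infDist_sq_mul_le [CompleteSpace H] (hu : IsStrongGlobalSolution T θ t₀ u₀ u)
    (hT : IsQuasiNonexpansive T) (hθ : ∀ t, t₀ ≤ t → 0 ≤ θ t)
    (hθ_int : IntervalIntegrable θ volume t₁ t₂) (h₁ : t₀ ≤ t₁) (h₁₂ : t₁ ≤ t₂) {κ : ℝ}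
    (hκ : 0 < κ) (hsub : ∀ s ∈ Icc t₁ t₂,
      Metric.infDist (u s) {x | T x = x} ≤ κ * ‖u s - T (u s)‖) :
    Metric.infDist (u t₂) {x | T x = x} ^ 2 * (1 + (∫ s in t₁..t₂, θ s) / κ ^ 2) ≤
      Metric.infDist (u t₁) {x | T x = x} ^ 2 := by
  set S := {x | T x = x}
  rcases S.eq_empty_or_nonempty with hS | hS
  · simp [hS]
  set D := Metric.infDist (u t₂) S
  have hΘ : 0 ≤ ∫ s in t₁..t₂, θ s :=
    intervalIntegral.integral_nonneg h₁₂ fun s hs => hθ s (h₁.trans hs.1)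
  have hm : ∀ s ∈ Icc t₁ t₂, D ^ 2 / κ ^ 2 ≤ ‖T (u s) - u s‖ ^ 2 := by
    intro s hs
    have hD : D ≤ κ * ‖T (u s) - u s‖ := by
      rw [norm_sub_rev]
      exact (hu.infDist_le_infDist_of_le hT hθ
        (hθ_int.mono_set (uIcc_subset_uIcc_right (Icc_subset_uIcc hs))) (h₁.trans hs.1)
        hs.2).trans (hsub s hs)
    rw [div_le_iff₀ (by positivity), ← mul_pow, mul_comm]
    exact pow_le_pow_left₀ Metric.infDist_nonneg hD 2
  refine Metric.le_infDist_sq hS (by positivity) fun p hp => ?_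
  have hD : D ≤ ‖u t₂ - p‖ := dist_eq_norm (u t₂) p ▸ Metric.infDist_le_dist_of_mem hp
  calc D ^ 2 * (1 + (∫ s in t₁..t₂, θ s) / κ ^ 2)
      = D ^ 2 + D ^ 2 / κ ^ 2 * ∫ s in t₁..t₂, θ s := by ring
    _ ≤ ‖u t₂ - p‖ ^ 2 + D ^ 2 / κ ^ 2 * ∫ s in t₁..t₂, θ s := by
        gcongr; exact Metric.infDist_nonneg
    _ ≤ dist (u t₁) p ^ 2 := by
        rw [dist_eq_norm]; exact hu.norm_sub_sq_add_mul_integral_le hT hθ hθ_int h₁ h₁₂ hp hm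

theorem infDist_le_mul_exp [CompleteSpace H] (hu : IsStrongGlobalSolution T θ t₀ u₀ u)
    (hT : IsQuasiNonexpansive T) (hθ : ∀ t, t₀ ≤ t → 0 ≤ θ t)
    (hθ_int : IntervalIntegrable θ volume t₁ t₂) (h₁ : t₀ ≤ t₁) (h₁₂ : t₁ ≤ t₂) {κ : ℝ}
    (hκ : 0 < κ) (hsub : ∀ s ∈ Icc t₁ t₂,
      Metric.infDist (u s) {x | T x = x} ≤ κ * ‖u s - T (u s)‖) :
    Metric.infDist (u t₂) {x | T x = x} ≤
      Metric.infDist (u t₁) {x | T x = x} * Real.exp (-(1 / (2 * κ ^ 2)) * ∫ s in t₁..t₂, θ s) := by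
  set g := fun t => Metric.infDist (u t) {x | T x = x} ^ 2
  set Φ := fun t => (∫ s in t₁..t, θ s) / κ ^ 2
  have hθ_sub : ∀ s ∈ Icc t₁ t₂, ∀ t ∈ Icc s t₂, IntervalIntegrable θ volume s t :=
    fun s hs t ht => hθ_int.mono_set (uIcc_subset_uIcc (Icc_subset_uIcc hs)
      (Icc_subset_uIcc ⟨hs.1.trans ht.1, ht.2⟩))
  have hΦ_sub : ∀ s ∈ Icc t₁ t₂, ∀ t ∈ Icc s t₂, Φ t - Φ s = (∫ r in s..t, θ r) / κ ^ 2 := by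
    intro s hs t ht
    rw [← sub_div, intervalIntegral.integral_interval_sub_left
      (hθ_sub t₁ (left_mem_Icc.2 h₁₂) t ⟨hs.1.trans ht.1, ht.2⟩)
      (hθ_sub t₁ (left_mem_Icc.2 h₁₂) s hs)]
  have hΦ_cont : ContinuousOn Φ (Icc t₁ t₂) := by
    have h := intervalIntegral.continuousOn_primitive_interval' hθ_int left_mem_uIcc
    rw [uIcc_of_le h₁₂] at h
    exact h.div_const _
  have hΦ₁ : Φ t₁ = 0 := by simp [Φ]
  have h_exp : g t₂ * Real.exp (Φ t₂ - Φ t₁) ≤ g t₁ := by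
    refine mul_exp_le_of_mul_one_add_le h₁₂ hΦ_cont ?_ (fun t _ => sq_nonneg _) fun s hs t ht => ?_
    · rw [hΦ₁]
      exact div_nonneg (intervalIntegral.integral_nonneg h₁₂ fun s hs => hθ s (h₁.trans hs.1))
        (sq_nonneg κ)
    · rw [hΦ_sub s hs t ht]
      exact hu.infDist_sq_mul_le hT hθ (hθ_sub s hs t ht) (h₁.trans hs.1) ht.1 hκ
        fun r hr => hsub r ⟨hs.1.trans hr.1, hr.2.trans ht.2⟩
  rw [← pow_le_pow_iff_left₀ Metric.infDist_nonneg
    (mul_nonneg Metric.infDist_nonneg (Real.exp_pos _).le) two_ne_zero, mul_pow,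
    ← Real.exp_nat_mul]
  calc g t₂ = g t₂ * Real.exp (Φ t₂ - Φ t₁) * Real.exp (-(Φ t₂ - Φ t₁)) := by
        rw [mul_assoc, ← Real.exp_add, add_neg_cancel, Real.exp_zero, mul_one]
    _ ≤ g t₁ * Real.exp (-(Φ t₂ - Φ t₁)) := by gcongr
    _ = _ := by
        congr 2
        simp only [hΦ₁, Φ]
        field_simp
        ring

end IsStrongGlobalSolution

end Dynamics

theorem stmt_7_general
    {H : Type*} [NormedAddCommGroup H] [InnerProductSpace ℝ H] [CompleteSpace H]
    (T : H → H)
    (hT : ∀ (y x : H), T x = x → ‖T y - x‖ ≤ ‖y - x‖)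
    (t₀ : ℝ)
    (θ : ℝ → ℝ) (hθ : ∀ t, t₀ ≤ t → 0 ≤ θ t)
    (hθint : ∀ b : ℝ, IntervalIntegrable θ volume t₀ b)
    (u : ℝ → H) (u₀ : H)
    (huint : ∀ t, t₀ ≤ t →
      IntervalIntegrable (fun s => θ s • (T (u s) - u s)) volume t₀ t)
    (husol : ∀ t, t₀ ≤ t →
      u t = u₀ + ∫ s in t₀..t, θ s • (T (u s) - u s))
    (uhat : H) (huhat : T uhat = uhat)
    (r κ : ℝ) (hκ : 0 < κ)
    (hsub : ∀ z : H, ‖z - uhat‖ < r →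
      Metric.infDist z {x : H | T x = x} ≤ κ * ‖z - T z‖)
    (L : ℝ) (hlim : Tendsto (fun t => ‖u t - uhat‖) atTop (nhds L)) (hLr : L < r) :
    ∃ t' : ℝ, t₀ ≤ t' ∧ ∀ t, t' ≤ t →
      Metric.infDist (u t) {x : H | T x = x} ≤
        ‖u t' - uhat‖ * Real.exp (-(1 / (2 * κ ^ 2)) * ∫ s in t'..t, θ s) := by
  have hu : IsStrongGlobalSolution T θ t₀ u₀ u := fun t ht => ⟨huint t ht, husol t ht⟩
  obtain ⟨t₁, ht₁⟩ := eventually_atTop.1 (hlim.eventually_lt_const hLr)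
  set t' := max t₀ t₁
  refine ⟨t', le_max_left _ _, fun t ht => ?_⟩
  have h_near : ∀ s ∈ Icc t' t, ‖u s - uhat‖ < r :=
    fun s hs => ht₁ s ((le_max_right _ _).trans hs.1)
  calc Metric.infDist (u t) {x | T x = x}
      ≤ Metric.infDist (u t') {x | T x = x} *
          Real.exp (-(1 / (2 * κ ^ 2)) * ∫ s in t'..t, θ s) :=
        hu.infDist_le_mul_exp hT hθ ((hθint t').symm.trans (hθint t)) (le_max_left _ _) ht hκ
          fun s hs => hsub (u s) (h_near s hs)
    _ ≤ ‖u t' - uhat‖ * Real.exp (-(1 / (2 * κ ^ 2)) * ∫ s in t'..t, θ s) := by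
        gcongr
        exact dist_eq_norm (u t') uhat ▸ Metric.infDist_le_dist_of_mem huhat

theorem stmt_7
    {H : Type*} [NormedAddCommGroup H] [InnerProductSpace ℝ H] [CompleteSpace H]
    (T : H → H)
    (hT : ∀ (y x : H), T x = x → ‖T y - x‖ ≤ ‖y - x‖)
    (hfix : ∃ x : H, T x = x)
    (hdemi : ∀ (x : ℕ → H) (p : H),
      (∀ y : H, Tendsto (fun k => ⟪x k, y⟫) atTop (nhds ⟪p, y⟫)) →
      Tendsto (fun k => ‖T (x k) - x k‖) atTop (nhds 0) → T p = p)
    (t₀ : ℝ) (ht₀ : 0 < t₀)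
    (θ : ℝ → ℝ) (hθ : ∀ t, t₀ ≤ t → 0 ≤ θ t)
    (hθint : ∀ b : ℝ, IntervalIntegrable θ volume t₀ b)
    (u : ℝ → H) (u₀ : H)
    (huint : ∀ t, t₀ ≤ t →
      IntervalIntegrable (fun s => θ s • (T (u s) - u s)) volume t₀ t)
    (husol : ∀ t, t₀ ≤ t →
      u t = u₀ + ∫ s in t₀..t, θ s • (T (u s) - u s))
    (uhat : H) (huhat : T uhat = uhat)
    (hweak : ∀ y : H, Tendsto (fun t => ⟪u t, y⟫) atTop (nhds ⟪uhat, y⟫))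
    (r κ : ℝ) (hr : 0 < r) (hκ : 0 < κ)
    (hsub : ∀ z : H, ‖z - uhat‖ < r →
      Metric.infDist z {x : H | T x = x} ≤ κ * ‖z - T z‖)
    (L : ℝ) (hlim : Tendsto (fun t => ‖u t - uhat‖) atTop (nhds L)) (hLr : L < r) :
    ∃ t' : ℝ, t₀ ≤ t' ∧ ∀ t, t' ≤ t →
      Metric.infDist (u t) {x : H | T x = x} ≤
        ‖u t' - uhat‖ * Real.exp (-(1 / (2 * κ ^ 2)) * ∫ s in t'..t, θ s) :=
  stmt_7_general T hT t₀ θ hθ hθint u u₀ huint husol uhat huhat r κ hκ hsub L hlim hLr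
end

section
/- Let A : H → H be a single-valued α-monotone operator which is Lipschitz continuous with constant l ≥ |α|, and let B : H ⇉ H be maximally β-monotone. Suppose the parameters satisfy (C2): α + β ≥ 0, γ, δ > 0, λ, μ ≥ 1, 1 + 2γα > 0, 2 − 2γβ ≤ μ ≤ 2 + 2γα, (λ − 1)(μ − 1) = 1 and δ = (λ − 1)γ, together with μ ≠ 2 + 2γα. Then the operator T = R_{δB}^{μ} ∘ R_{γA}^{λ} is Lipschitz continuous with constant ζ = √( 1 − λ(μ−1)²[(λ−1)(2+2γα) − λ] / (1 + 2γα + γ²l²) ), and ζ < 1. -/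
/-!
Write `v, w` for the differences of `J_{γA}` and of `A ∘ J_{γA}` at two points, so that the
points differ by `v + γ w`. Monotonicity of `B` together with `2 - 2γβ ≤ μ` shows that the
relaxed resolvent `R_{δB}^μ` is `(μ - 1)`-Lipschitz, and since `(μ - 1) δ = γ` the images under
`R_{γA}^λ` differ, after scaling by `μ - 1`, by `(μ - 1) v - γ w`. Expanding `‖(μ - 1) v - γ w‖²`
and using `α`-monotonicity and `l`-Lipschitz continuity of `A` bounds it by `ζ² ‖v + γ w‖²`;
`ζ²` is exactly the factor for which the coefficient of `‖v‖²` cancels.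
-/

open scoped RealInnerProductSpace

section

variable {H : Type*} [NormedAddCommGroup H] [InnerProductSpace ℝ H]

theorem norm_relax_resolvent_sub_le {B : H → Set H} {JB : H → H} {β δ μ : ℝ}
    (hB : ∀ x y xp yp : H, xp ∈ B x → yp ∈ B y → β * ‖x - y‖ ^ 2 ≤ ⟪x - y, xp - yp⟫)
    (hJB : ∀ x : H, ∃ b ∈ B (JB x), x = JB x + δ • b)
    (hδ : 0 ≤ δ) (hμ : 1 ≤ μ) (hμβ : 2 - 2 * δ * (μ - 1) * β ≤ μ) (x y : H) :
    ‖((1 - μ) • x + μ • JB x) - ((1 - μ) • y + μ • JB y)‖ ≤ (μ - 1) * ‖x - y‖ := by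
  obtain ⟨b, hb, hxb⟩ := hJB x
  obtain ⟨b', hb', hyb⟩ := hJB y
  set t := JB x - JB y
  have hsplit : x - y = t + δ • (b - b') := by
    linear_combination (norm := module) hxb - hyb
  have hdiff : ((1 - μ) • x + μ • JB x) - ((1 - μ) • y + μ • JB y)
      = μ • t - (μ - 1) • (x - y) := by
    module
  have hinner : (1 + δ * β) * ‖t‖ ^ 2 ≤ ⟪t, x - y⟫ := by
    rw [hsplit, inner_add_right, real_inner_smul_right, real_inner_self_eq_norm_sq]
    nlinarith [hB _ _ _ _ hb hb']
  have hsq : ‖μ • t - (μ - 1) • (x - y)‖ ^ 2 ≤ ((μ - 1) * ‖x - y‖) ^ 2 := by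
    rw [norm_sub_sq_real, real_inner_smul_left, real_inner_smul_right, norm_smul, norm_smul,
      Real.norm_of_nonneg (by linarith), Real.norm_of_nonneg (by linarith)]
    nlinarith [mul_le_mul_of_nonneg_left hinner
      (by positivity : 0 ≤ 2 * μ * (μ - 1)), mul_nonneg (by linarith : 0 ≤ μ) (sq_nonneg ‖t‖)]
  rw [hdiff]
  exact le_of_pow_le_pow_left₀ two_ne_zero (by nlinarith [norm_nonneg (x - y)]) hsq

theorem norm_smul_sub_smul_resolvent_le {A JA : H → H} {α γ l c κ : ℝ}
    (hA : ∀ x y : H, α * ‖x - y‖ ^ 2 ≤ ⟪x - y, A x - A y⟫)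
    (hAlip : ∀ x y : H, ‖A x - A y‖ ≤ l * ‖x - y‖)
    (hJA : ∀ x : H, x = JA x + γ • A (JA x))
    (hγ : 0 ≤ γ) (hc : 0 ≤ c) (hκ0 : 0 ≤ κ) (hκ1 : κ ≤ 1)
    (hκ : κ * (1 + 2 * γ * α + γ ^ 2 * l ^ 2) = c ^ 2 - 2 * γ * α * c + γ ^ 2 * l ^ 2)
    (x y : H) :
    ‖c • (JA x - JA y) - γ • (A (JA x) - A (JA y))‖ ≤ √κ * ‖x - y‖ := by
  set v := JA x - JA y
  set w := A (JA x) - A (JA y)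
  have hxy : x - y = v + γ • w := by
    linear_combination (norm := module) hJA x - hJA y
  have hw : ‖w‖ ^ 2 ≤ l ^ 2 * ‖v‖ ^ 2 := by
    rw [← mul_pow]
    exact pow_le_pow_left₀ (norm_nonneg w) (hAlip _ _) 2
  have hsq : ‖c • v - γ • w‖ ^ 2 ≤ κ * ‖x - y‖ ^ 2 := by
    rw [hxy, norm_sub_sq_real, norm_add_sq_real, real_inner_smul_left, real_inner_smul_right,
      norm_smul, norm_smul, Real.norm_of_nonneg hc, Real.norm_of_nonneg hγ]
    nlinarith [mul_le_mul_of_nonneg_left (hA (JA x) (JA y))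
        (by positivity : 0 ≤ 2 * γ * (κ + c)),
      mul_le_mul_of_nonneg_left hw (by nlinarith : 0 ≤ γ ^ 2 * (1 - κ))]
  calc ‖c • v - γ • w‖ ≤ √(κ * ‖x - y‖ ^ 2) := Real.le_sqrt_of_sq_le hsq
    _ = √κ * ‖x - y‖ := by rw [Real.sqrt_mul hκ0, Real.sqrt_sq (norm_nonneg _)]

end

section

variable {α γ lam μ l : ℝ}

noncomputable def contractionSq (α γ lam μ l : ℝ) : ℝ :=
  1 - lam * (μ - 1) ^ 2 * ((lam - 1) * (2 + 2 * γ * α) - lam) / (1 + 2 * γ * α + γ ^ 2 * l ^ 2)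

theorem contractionSq_mul (hD : 0 < 1 + 2 * γ * α + γ ^ 2 * l ^ 2)
    (hlamμ : (lam - 1) * (μ - 1) = 1) :
    contractionSq α γ lam μ l * (1 + 2 * γ * α + γ ^ 2 * l ^ 2)
      = (μ - 1) ^ 2 - 2 * γ * α * (μ - 1) + γ ^ 2 * l ^ 2 := by
  have hkey : lam * (μ - 1) ^ 2 * ((lam - 1) * (2 + 2 * γ * α) - lam)
      = μ * (2 + 2 * γ * α - μ) := by
    linear_combination
      ((2 + 2 * γ * α) * ((lam - 1) * (μ - 1) + μ) - (lam - 1) * (μ - 1) + 1 - 2 * μ) * hlamμ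
  rw [contractionSq, hkey, sub_mul, div_mul_cancel₀ _ hD.ne']
  ring

theorem contractionSq_nonneg (hD : 0 < 1 + 2 * γ * α + γ ^ 2 * l ^ 2)
    (hlamμ : (lam - 1) * (μ - 1) = 1) (hl : |α| ≤ l) :
    0 ≤ contractionSq α γ lam μ l := by
  have hα : α ^ 2 ≤ l ^ 2 := sq_le_sq' (abs_le.mp hl).1 (abs_le.mp hl).2
  refine nonneg_of_mul_nonneg_left ?_ hD
  rw [contractionSq_mul hD hlamμ]
  nlinarith [sq_nonneg (μ - 1 - γ * α), mul_le_mul_of_nonneg_left hα (sq_nonneg γ)]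

theorem contractionSq_lt_one (hD : 0 < 1 + 2 * γ * α + γ ^ 2 * l ^ 2)
    (hlamμ : (lam - 1) * (μ - 1) = 1) (hμ : 1 ≤ μ) (hμα : μ < 2 + 2 * γ * α) :
    contractionSq α γ lam μ l < 1 := by
  refine lt_of_mul_lt_mul_right ?_ hD.le
  rw [contractionSq_mul hD hlamμ]
  nlinarith

end

theorem stmt_17_general
    {H : Type*} [NormedAddCommGroup H] [InnerProductSpace ℝ H]
    (α β γ δ lam μ l : ℝ)
    (A : H → H)
    (hAmono : ∀ x y : H, α * ‖x - y‖ ^ 2 ≤ ⟪x - y, A x - A y⟫)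
    (hAlip : ∀ x y : H, ‖A x - A y‖ ≤ l * ‖x - y‖)
    (hl : |α| ≤ l)
    (B : H → Set H)
    (hBmono : ∀ x y xp yp : H, xp ∈ B x → yp ∈ B y →
      β * ‖x - y‖ ^ 2 ≤ ⟪x - y, xp - yp⟫)
    (JA JB : H → H)
    (hJA : ∀ x : H, x = JA x + γ • A (JA x))
    (hJB : ∀ x : H, ∃ b ∈ B (JB x), x = JB x + δ • b)
    (RA RB T : H → H)
    (hRA : ∀ x : H, RA x = (1 - lam) • x + lam • JA x)
    (hRB : ∀ x : H, RB x = (1 - μ) • x + μ • JB x)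
    (hTdef : ∀ x : H, T x = RB (RA x))
    (hC2 : 0 ≤ α + β ∧ 0 < γ ∧ 0 < δ ∧ 1 ≤ lam ∧ 1 ≤ μ ∧ 0 < 1 + 2 * γ * α ∧
      2 - 2 * γ * β ≤ μ ∧ μ ≤ 2 + 2 * γ * α ∧ (lam - 1) * (μ - 1) = 1 ∧
      δ = (lam - 1) * γ)
    (hμne : μ ≠ 2 + 2 * γ * α)
    (ζ : ℝ)
    (hζ : ζ = Real.sqrt (1 - lam * (μ - 1) ^ 2 * ((lam - 1) * (2 + 2 * γ * α) - lam)
      / (1 + 2 * γ * α + γ ^ 2 * l ^ 2))) :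
    (∀ x y : H, ‖T x - T y‖ ≤ ζ * ‖x - y‖) ∧ ζ < 1 := by
  obtain ⟨-, hγ, hδ, -, hμ, hγα, hμβ, hμα, hlamμ, hδγ⟩ := hC2
  have hD : 0 < 1 + 2 * γ * α + γ ^ 2 * l ^ 2 := add_pos_of_pos_of_nonneg hγα (by positivity)
  have hδμ : δ * (μ - 1) = γ := by linear_combination (μ - 1) * hδγ + γ * hlamμ
  have hκ0 := contractionSq_nonneg hD hlamμ hl
  have hκ1 := contractionSq_lt_one hD hlamμ hμ (lt_of_le_of_ne hμα hμne)
  change ζ = √(contractionSq α γ lam μ l) at hζ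
  refine ⟨fun x y => ?_, hζ ▸ (Real.sqrt_lt' one_pos).2 (by rwa [one_pow])⟩
  have hRAdiff : (μ - 1) • (RA x - RA y)
      = (μ - 1) • (JA x - JA y) - γ • (A (JA x) - A (JA y)) := by
    rw [hRA, hRA]
    linear_combination (norm := module) (μ - 1) • (1 - lam) • (hJA x - hJA y)
      - hlamμ • (γ • (A (JA x) - A (JA y)))
  calc ‖T x - T y‖ ≤ (μ - 1) * ‖RA x - RA y‖ := by
        rw [hTdef, hTdef, hRB, hRB]
        exact norm_relax_resolvent_sub_le hBmono hJB hδ.le hμ (by rwa [mul_assoc 2, hδμ]) _ _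
    _ = ‖(μ - 1) • (RA x - RA y)‖ := by rw [norm_smul, Real.norm_of_nonneg (by linarith)]
    _ ≤ ζ * ‖x - y‖ := by
        rw [hRAdiff, hζ]
        exact norm_smul_sub_smul_resolvent_le hAmono hAlip hJA hγ.le (by linarith) hκ0 hκ1.le
          (contractionSq_mul hD hlamμ) x y

theorem stmt_17
    {H : Type*} [NormedAddCommGroup H] [InnerProductSpace ℝ H] [CompleteSpace H]
    (α β γ δ lam μ l : ℝ)
    (A : H → H)
    (hAmono : ∀ x y : H, α * ‖x - y‖ ^ 2 ≤ ⟪x - y, A x - A y⟫)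
    (hAlip : ∀ x y : H, ‖A x - A y‖ ≤ l * ‖x - y‖)
    (hl : |α| ≤ l)
    (B : H → Set H)
    (hBmono : ∀ x y xp yp : H, xp ∈ B x → yp ∈ B y →
      β * ‖x - y‖ ^ 2 ≤ ⟪x - y, xp - yp⟫)
    (hBmax : ∀ x xp : H,
      (∀ y yp : H, yp ∈ B y → β * ‖x - y‖ ^ 2 ≤ ⟪x - y, xp - yp⟫) → xp ∈ B x)
    (JA JB : H → H)
    (hJA : ∀ x : H, x = JA x + γ • A (JA x))
    (hJB : ∀ x : H, ∃ b ∈ B (JB x), x = JB x + δ • b)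
    (RA RB T : H → H)
    (hRA : ∀ x : H, RA x = (1 - lam) • x + lam • JA x)
    (hRB : ∀ x : H, RB x = (1 - μ) • x + μ • JB x)
    (hTdef : ∀ x : H, T x = RB (RA x))
    (hC2 : 0 ≤ α + β ∧ 0 < γ ∧ 0 < δ ∧ 1 ≤ lam ∧ 1 ≤ μ ∧ 0 < 1 + 2 * γ * α ∧
      2 - 2 * γ * β ≤ μ ∧ μ ≤ 2 + 2 * γ * α ∧ (lam - 1) * (μ - 1) = 1 ∧
      δ = (lam - 1) * γ)
    (hμne : μ ≠ 2 + 2 * γ * α)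
    (ζ : ℝ)
    (hζ : ζ = Real.sqrt (1 - lam * (μ - 1) ^ 2 * ((lam - 1) * (2 + 2 * γ * α) - lam)
      / (1 + 2 * γ * α + γ ^ 2 * l ^ 2))) :
    (∀ x y : H, ‖T x - T y‖ ≤ ζ * ‖x - y‖) ∧ ζ < 1 :=
  stmt_17_general α β γ δ lam μ l A hAmono hAlip hl B hBmono JA JB hJA hJB RA RB T hRA hRB hTdef hC2
    hμne ζ hζ
end
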